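/- arXiv:2508.07876 — 11 statements merged into one kernel-verified Lean document; each statement's English description precedes it below -/
import Mathlib

section
/- Suppose Φ has the unique solution property (USP). Then S_Φ = S_Φ^sync. -/
open Set Filter Topology

/-- The set of points through which a (bi-infinite) solution of `Φ` passes. -/
def SolSet {𝔛 : Type*} (Φ : 𝔛 → 𝔛) : Set 𝔛 :=
  {x | ∃ χ : ℤ → 𝔛, χ 0 = x ∧ ∀ t : ℤ, χ (t + 1) = Φ (χ t)}

/-- The bi-infinite orbit of `z0` under a bijection `φ`:
`z ∈ orb φ z0` iff `z = φ^t z0` for some `t ∈ ℤ`. -/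
def orb {𝒵 : Type*} (φ : 𝒵 → 𝒵) (z0 : 𝒵) : Set 𝒵 :=
  {z | ∃ n : ℕ, φ^[n] z0 = z ∨ φ^[n] z = z0}

/-- The set of points through which a synchronized solution of the bundle map `Φ`
(over `φ`, with bundle projection `π`) passes.  A synchronized solution through `x`
is a map `χ` defined on the orbit of `π x` with `χ (π x) = x` and `Φ ∘ χ = χ ∘ φ`
(formalized via an arbitrary extension of `χ` to all of `𝒵`). -/
def SyncSolSet {𝔛 𝒵 : Type*} (Φ : 𝔛 → 𝔛) (φ : 𝒵 → 𝒵) (π : 𝔛 → 𝒵) : Set 𝔛 :=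
  {x | ∃ χ : 𝒵 → 𝔛, χ (π x) = x ∧ ∀ z ∈ orb φ (π x), Φ (χ z) = χ (φ z)}

/-- The set of periodic points of a map. -/
def PerSet {α : Type*} (g : α → α) : Set α := {x | ∃ n : ℕ, 1 ≤ n ∧ g^[n] x = x}

/-- The set of synchronized periodic points: periodic points of `Φ` whose minimal
period is not greater than the minimal period of their base point under `φ`. -/
def SPerSet {𝔛 𝒵 : Type*} (Φ : 𝔛 → 𝔛) (φ : 𝒵 → 𝒵) (π : 𝔛 → 𝒵) : Set 𝔛 :=
  {x | ∃ n : ℕ, 1 ≤ n ∧ Φ^[n] x = x ∧ ∀ m : ℕ, 1 ≤ m → m < n → φ^[m] (π x) ≠ π x}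

theorem stmt6 {𝔛 𝒵 : Type*} [TopologicalSpace 𝔛] [TopologicalSpace 𝒵]
    [T2Space 𝔛] [T2Space 𝒵]
    (π : 𝔛 → 𝒵) (hπ : Continuous π)
    (φ : 𝒵 → 𝒵) (hφc : Continuous φ) (hφb : Function.Bijective φ)
    (Φ : 𝔛 → 𝔛) (hΦc : Continuous Φ) (hbundle : π ∘ Φ = φ ∘ π)
    -- unique solution property: S_Φ ∩ π⁻¹(z) is a singleton for every z
    (hUSP : ∀ z : 𝒵, ∃! x : 𝔛, x ∈ SolSet Φ ∧ π x = z) :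
    SolSet Φ = SyncSolSet Φ φ π := by
  have hπΦ : ∀ x, π (Φ x) = φ (π x) := fun x => congrFun hbundle x
  have hshift : ∀ x ∈ SolSet Φ, Φ x ∈ SolSet Φ := by
    rintro x ⟨χ, h0, hs⟩
    exact ⟨fun t => χ (t + 1), by show χ (0 + 1) = Φ x; rw [hs 0, h0], fun t => hs (t + 1)⟩
  -- the selection map
  set σ : 𝒵 → 𝔛 := fun z => (hUSP z).choose with hσ
  have hσsol : ∀ z, σ z ∈ SolSet Φ := fun z => ((hUSP z).choose_spec.1).1
  have hσπ : ∀ z, π (σ z) = z := fun z => ((hUSP z).choose_spec.1).2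
  have hσuniq : ∀ z, ∀ y, y ∈ SolSet Φ → π y = z → y = σ z :=
    fun z y hy hyz => (hUSP z).choose_spec.2 y ⟨hy, hyz⟩
  have hσcomm : ∀ z, Φ (σ z) = σ (φ z) := fun z =>
    hσuniq (φ z) _ (hshift _ (hσsol z)) (by rw [hπΦ, hσπ])
  ext x
  constructor
  · intro hx
    exact ⟨σ, (hσuniq (π x) x hx rfl).symm, fun z _ => hσcomm z⟩
  · rintro ⟨χ, hχ0, hχs⟩
    -- build a bi-infinite solution through x
    set e : 𝒵 ≃ 𝒵 := Equiv.ofBijective φ hφb with he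
    have hea : ∀ z, e z = φ z := fun z => rfl
    have hpow : ∀ (n : ℕ) (z : 𝒵), (e ^ n) z = φ^[n] z := by
      intro n
      induction n with
      | zero => intro z; simp
      | succ k ih =>
        intro z
        rw [pow_succ', Equiv.Perm.mul_apply, ih, hea, Function.iterate_succ_apply']
    have horb : ∀ t : ℤ, (e ^ t) (π x) ∈ orb φ (π x) := by
      intro t
      rcases t with n | n
      · exact ⟨n, Or.inl (by rw [← hpow]; rfl)⟩
      · refine ⟨n + 1, Or.inr ?_⟩
        rw [← hpow]
        have : (e ^ (n + 1 : ℕ)) ((e ^ (Int.negSucc n)) (π x)) =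
            ((e ^ (n + 1 : ℕ)) * (e ^ (Int.negSucc n))) (π x) := rfl
        rw [this, ← zpow_natCast, ← zpow_add]
        have h0 : ((n + 1 : ℕ) : ℤ) + Int.negSucc n = 0 := by
          simp only [Int.negSucc_eq]
          push_cast
          ring
        rw [h0]; simp
    refine ⟨fun t => χ ((e ^ t) (π x)), by simpa using hχ0, fun t => ?_⟩
    have : (e ^ (t + 1)) (π x) = φ ((e ^ t) (π x)) := by
      rw [add_comm, zpow_add, zpow_one, Equiv.Perm.mul_apply, hea]
    show χ ((e ^ (t + 1)) (π x)) = Φ (χ ((e ^ t) (π x)))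
    rw [this, ← hχs _ (horb t)]
end

section
/- Suppose π is proper and S ⊆ 𝔛 is closed. Then the fiber map z ↦ S ∩ π⁻¹(z) is upper hemi-continuous at every z ∈ 𝒵. Furthermore, if 𝔛 and 𝒵 are Polish spaces, then the set of points z ∈ 𝒵 at which this fiber map is hemi-continuous is residual. -/
open Set Filter Topology

/-- Upper hemi-continuity of a set-valued map at a point. -/
def UpperHemiAt {V W : Type*} [TopologicalSpace V] [TopologicalSpace W]
    (S : V → Set W) (v : V) : Prop :=
  ∀ W' : Set W, IsOpen W' → S v ⊆ W' →
    ∃ V₀ : Set V, IsOpen V₀ ∧ v ∈ V₀ ∧ ∀ v' ∈ V₀, S v' ⊆ W'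

/-- Lower hemi-continuity of a set-valued map at a point. -/
def LowerHemiAt {V W : Type*} [TopologicalSpace V] [TopologicalSpace W]
    (S : V → Set W) (v : V) : Prop :=
  ∀ W₁ : Set W, IsOpen W₁ → (W₁ ∩ S v).Nonempty →
    ∃ V₀ : Set V, IsOpen V₀ ∧ v ∈ V₀ ∧ ∀ v' ∈ V₀, (W₁ ∩ S v').Nonempty

/-- Hemi-continuity of a set-valued map at a point. -/
def HemiAt {V W : Type*} [TopologicalSpace V] [TopologicalSpace W]
    (S : V → Set W) (v : V) : Prop :=
  UpperHemiAt S v ∧ LowerHemiAt S v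

/-!
The points whose fiber leaves an open set `W'` form the closed set `π '' (S \ W')`, which gives
upper hemi-continuity. For lower hemi-continuity, the points whose fiber meets a basic open set
`U` form `π '' (U ∩ S)`, and the fiber map is lower hemi-continuous at every point lying outside
all the boundary sets `π '' (U ∩ S) \ interior (π '' (U ∩ S))`. In a metrizable space `U ∩ S` is a
countable union of closed sets, hence so is its image under the closed map `π`, and such a set
differs from its interior by a countable union of frontiers of closed sets, which is meagre.
-/

section FSigma

variable {X Y : Type*} [TopologicalSpace X] [TopologicalSpace Y]

def IsFσ (s : Set X) : Prop :=
  ∃ T : Set (Set X), (∀ t ∈ T, IsClosed t) ∧ T.Countable ∧ s = ⋃₀ T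

theorem IsOpen.isFσ [PerfectlyNormalSpace X] {U : Set X} (hU : IsOpen U) : IsFσ U := by
  obtain ⟨T, hT, hTc, hUT⟩ := hU.isClosed_compl.isGδ
  refine ⟨compl '' T, ?_, hTc.image _, ?_⟩
  · rintro _ ⟨t, ht, rfl⟩
    exact (hT t ht).isClosed_compl
  · rw [← compl_compl U, hUT, compl_sInter]

theorem IsFσ.inter_isClosed {s t : Set X} (hs : IsFσ s) (ht : IsClosed t) : IsFσ (s ∩ t) := by
  obtain ⟨T, hT, hTc, rfl⟩ := hs
  refine ⟨(· ∩ t) '' T, ?_, hTc.image _, ?_⟩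
  · rintro _ ⟨u, hu, rfl⟩
    exact (hT u hu).inter ht
  · rw [sUnion_image, sUnion_eq_biUnion, iUnion₂_inter]

theorem IsFσ.image_of_isClosedMap {f : X → Y} (hf : IsClosedMap f) {s : Set X} (hs : IsFσ s) :
    IsFσ (f '' s) := by
  obtain ⟨T, hT, hTc, rfl⟩ := hs
  refine ⟨image f '' T, ?_, hTc.image _, image_sUnion⟩
  rintro _ ⟨t, ht, rfl⟩
  exact hf t (hT t ht)

theorem IsClosed.isNowhereDense_frontier {s : Set X} (hs : IsClosed s) :
    IsNowhereDense (frontier s) :=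
  isClosed_frontier.isNowhereDense_iff.mpr (interior_frontier hs)

theorem IsFσ.isMeagre_diff_interior {s : Set X} (hs : IsFσ s) :
    IsMeagre (s \ interior s) := by
  obtain ⟨T, hT, hTc, rfl⟩ := hs
  refine (isMeagre_biUnion hTc fun t ht => (hT t ht).isNowhereDense_frontier.isMeagre).mono ?_
  rintro x ⟨⟨t, ht, hxt⟩, hx⟩
  refine mem_biUnion ht ⟨subset_closure hxt, fun hxi => hx ?_⟩
  exact interior_mono (subset_sUnion_of_mem ht) hxi

end FSigma

def lowerInverse {V W : Type*} (F : V → Set W) (U : Set W) : Set V :=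
  {v | (U ∩ F v).Nonempty}

theorem lowerInverse_inter_preimage_singleton {X Z : Type*} {π : X → Z} {S : Set X}
    (U : Set X) : lowerInverse (fun z => S ∩ π ⁻¹' {z}) U = π '' (U ∩ S) := by
  ext z
  simp only [lowerInverse, mem_ofPred_eq, mem_image, Set.Nonempty, mem_inter_iff,
    mem_preimage, mem_singleton_iff, and_assoc]

section LowerHemi

variable {V W : Type*} [TopologicalSpace V] [TopologicalSpace W]

theorem lowerHemiAt_of_isTopologicalBasis {F : V → Set W} {v : V} {B : Set (Set W)}
    (hB : TopologicalSpace.IsTopologicalBasis B)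
    (h : ∀ U ∈ B, v ∈ lowerInverse F U → v ∈ interior (lowerInverse F U)) :
    LowerHemiAt F v := by
  rintro W₁ hW₁ ⟨w, hwW₁, hwF⟩
  obtain ⟨U, hUB, hwU, hUW₁⟩ := hB.exists_subset_of_mem_open hwW₁ hW₁
  refine ⟨_, isOpen_interior, h U hUB ⟨w, hwU, hwF⟩, fun v' hv' => ?_⟩
  obtain ⟨w', hw'U, hw'F⟩ := interior_subset hv'
  exact ⟨w', hUW₁ hw'U, hw'F⟩

theorem setOf_lowerHemiAt_mem_residual [SecondCountableTopology W] {F : V → Set W}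
    (h : ∀ U, IsOpen U → IsMeagre (lowerInverse F U \ interior (lowerInverse F U))) :
    {v | LowerHemiAt F v} ∈ residual V := by
  obtain ⟨B, hBc, -, hB⟩ := TopologicalSpace.exists_countable_basis W
  have hgood : (⋂ U ∈ B, (lowerInverse F U \ interior (lowerInverse F U))ᶜ) ∈ residual V :=
    (countable_bInter_mem hBc).mpr fun U hU => h U (hB.isOpen hU)
  refine mem_of_superset hgood fun v hv => lowerHemiAt_of_isTopologicalBasis hB fun U hU hvU => ?_
  by_contra hvi
  exact mem_iInter₂.mp hv U hU ⟨hvU, hvi⟩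

end LowerHemi

section FiberMap

variable {X Z : Type*} [TopologicalSpace X] [TopologicalSpace Z] {π : X → Z} {S : Set X}

theorem upperHemiAt_inter_preimage_singleton (hπ : IsClosedMap π) (hS : IsClosed S) (z : Z) :
    UpperHemiAt (fun z' => S ∩ π ⁻¹' {z'}) z := by
  intro W' hW' hsub
  refine ⟨(π '' (S \ W'))ᶜ, (hπ _ (hS.sdiff hW')).isOpen_compl, ?_, ?_⟩
  · rintro ⟨x, ⟨hxS, hxW'⟩, hxz⟩
    exact hxW' (hsub ⟨hxS, hxz⟩)
  · rintro z' hz' x ⟨hxS, hxz'⟩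
    by_contra hxW'
    exact hz' ⟨x, ⟨hxS, hxW'⟩, hxz'⟩

theorem setOf_lowerHemiAt_inter_preimage_singleton_mem_residual [PerfectlyNormalSpace X]
    [SecondCountableTopology X] (hπ : IsClosedMap π) (hS : IsClosed S) :
    {z | LowerHemiAt (fun z' => S ∩ π ⁻¹' {z'}) z} ∈ residual Z := by
  refine setOf_lowerHemiAt_mem_residual fun U hU => ?_
  rw [lowerInverse_inter_preimage_singleton]
  exact ((hU.isFσ.inter_isClosed hS).image_of_isClosedMap hπ).isMeagre_diff_interior

end FiberMap

theorem stmt7_general {𝔛 𝒵 : Type*} [TopologicalSpace 𝔛] [TopologicalSpace 𝒵]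
    (π : 𝔛 → 𝒵)
    -- π is proper: a closed map with compact fibers
    (hπclosed : IsClosedMap π)
    (S : Set 𝔛) (hS : IsClosed S) :
    -- the fiber map z ↦ S ∩ π⁻¹(z) is upper hemi-continuous at every point
    (∀ z : 𝒵, UpperHemiAt (fun z' : 𝒵 => S ∩ π ⁻¹' {z'}) z) ∧
    -- if 𝔛 and 𝒵 are Polish, the set of hemi-continuity points is residual
    (PolishSpace 𝔛 → PolishSpace 𝒵 →
      {z : 𝒵 | HemiAt (fun z' : 𝒵 => S ∩ π ⁻¹' {z'}) z} ∈ residual 𝒵) := by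
  refine ⟨upperHemiAt_inter_preimage_singleton hπclosed hS, fun _ _ => ?_⟩
  filter_upwards [setOf_lowerHemiAt_inter_preimage_singleton_mem_residual hπclosed hS] with z hz
  exact ⟨upperHemiAt_inter_preimage_singleton hπclosed hS z, hz⟩

theorem stmt7 {𝔛 𝒵 : Type*} [TopologicalSpace 𝔛] [TopologicalSpace 𝒵]
    [T2Space 𝔛] [T2Space 𝒵]
    (π : 𝔛 → 𝒵) (hπc : Continuous π)
    -- π is proper: a closed map with compact fibers
    (hπclosed : IsClosedMap π) (hπfib : ∀ z : 𝒵, IsCompact (π ⁻¹' {z}))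
    (S : Set 𝔛) (hS : IsClosed S) :
    -- the fiber map z ↦ S ∩ π⁻¹(z) is upper hemi-continuous at every point
    (∀ z : 𝒵, UpperHemiAt (fun z' : 𝒵 => S ∩ π ⁻¹' {z'}) z) ∧
    -- if 𝔛 and 𝒵 are Polish, the set of hemi-continuity points is residual
    (PolishSpace 𝔛 → PolishSpace 𝒵 →
      {z : 𝒵 | HemiAt (fun z' : 𝒵 => S ∩ π ⁻¹' {z'}) z} ∈ residual 𝒵) :=
  stmt7_general π hπclosed S hS
end

section
/- Suppose 𝒵 is a Polish space, 𝔛c is a compact Polish space, and Φ_z : 𝔛c → 𝔛c, z ∈ 𝒵, are maps such that (x,z) ↦ Φ_z(x) is continuous on 𝔛c × 𝒵. Then S_{Φ_z} = ⋂_{n≥1} Φ_zⁿ(𝔛c) for every z ∈ 𝒵, and the set of points z ∈ 𝒵 at which the set-valued map z ↦ S_{Φ_z} ⊆ 𝔛c is hemi-continuous is residual. -/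
open Set Filter Topology

/-!
Iterating `Φ_z` shrinks the compact sets `Φ_zⁿ(𝔛c)`. A point of their intersection lies on a
bi-infinite orbit: the partial orbits defined on `[-n, ∞)` form a decreasing sequence of nonempty
closed subsets of the compact space `ℤ → 𝔛c`. Since some `Φ_zⁿ(𝔛c)` already lies in any open
neighbourhood of the intersection, the tube lemma applied to the jointly continuous iterate shows
that `z ↦ S_{Φ_z}` is upper hemi-continuous everywhere. Consequently, for each closed `C` the set
of parameters whose solution set meets `C` is closed, and lower hemi-continuity can fail only on
the frontiers of these sets for `C` the closures of a countable basis: a meagre set.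
-/

section SetValued

variable {V W : Type*} [TopologicalSpace V] [TopologicalSpace W]

theorem isClosed_setOf_inter_nonempty_of_upperHemiAt {S : V → Set W}
    (hS : ∀ v, UpperHemiAt S v) {C : Set W} (hC : IsClosed C) :
    IsClosed {v | (C ∩ S v).Nonempty} := by
  rw [← isOpen_compl_iff, isOpen_iff_forall_mem_open]
  intro v hv
  obtain ⟨V₀, hV₀, hvV₀, hV⟩ := hS v Cᶜ hC.isOpen_compl fun y hy hyC => hv ⟨y, hyC, hy⟩
  exact ⟨V₀, fun v' hv' ⟨y, hyC, hy⟩ => hV v' hv' hy hyC, hV₀, hvV₀⟩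

theorem setOf_lowerHemiAt_mem_residual_s8 [SecondCountableTopology W] [RegularSpace W]
    {S : V → Set W} (hS : ∀ C, IsClosed C → IsClosed {v | (C ∩ S v).Nonempty}) :
    {v | LowerHemiAt S v} ∈ residual V := by
  obtain ⟨b, hbc, -, hb⟩ := TopologicalSpace.exists_countable_basis W
  set M : Set W → Set V := fun U => {v | (closure U ∩ S v).Nonempty}
  have hmeagre : IsMeagre (⋃ U ∈ b, frontier (M U)) := isMeagre_biUnion hbc fun U _ =>
    (isClosed_frontier.isNowhereDense_iff.mpr (interior_frontier (hS _ isClosed_closure))).isMeagre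
  refine mem_of_superset hmeagre fun v hv => ?_
  rintro W₁ hW₁ ⟨y, hyW, hyS⟩
  obtain ⟨U, hUb, hyU, hUW⟩ := hb.exists_closure_subset (hW₁.mem_nhds hyW)
  have hvM : v ∈ interior (M U) := by
    rw [← self_sdiff_frontier]
    exact ⟨⟨y, subset_closure hyU, hyS⟩, fun h => hv (mem_biUnion hUb h)⟩
  exact ⟨interior (M U), isOpen_interior, hvM,
    fun v' hv' => (interior_subset hv').mono (inter_subset_inter_left _ hUW)⟩

end SetValued

section Iterates

theorem antitone_range_iterate {X : Type*} (f : X → X) : Antitone fun n => range f^[n] :=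
  antitone_nat_of_succ_le fun n => by
    rw [Function.iterate_succ]
    exact range_comp_subset_range f f^[n]

variable {X : Type*} [TopologicalSpace X]

theorem exists_range_iterate_subset [CompactSpace X] [T2Space X] {f : X → X}
    (hf : Continuous f) {U : Set X} (hU : IsOpen U) (hsub : ⋂ n, range f^[n] ⊆ U) :
    ∃ n, range f^[n] ⊆ U :=
  exists_subset_nhds_of_isCompact' (antitone_range_iterate f).directed_ge
    (fun n => isCompact_range (hf.iterate n)) (fun n => (isCompact_range (hf.iterate n)).isClosed)
    fun _ hx => hU.mem_nhds (hsub hx)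

theorem continuous_iterate_uncurry {Z : Type*} [TopologicalSpace Z] {Φ : Z → X → X}
    (hΦ : Continuous fun p : X × Z => Φ p.2 p.1) (n : ℕ) :
    Continuous fun p : X × Z => (Φ p.2)^[n] p.1 := by
  induction n with
  | zero => exact continuous_fst
  | succ n ih =>
    simp only [Function.iterate_succ_apply']
    exact hΦ.comp (ih.prodMk continuous_snd)

end Iterates

section Solutions

variable {X : Type*}

theorem solSet_subset_range_iterate (f : X → X) (n : ℕ) : SolSet f ⊆ range f^[n] := by
  rintro x ⟨χ, rfl, hχ⟩
  have hshift : ∀ m : ℕ, ∀ t : ℤ, χ (t + m) = f^[m] (χ t) := by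
    intro m
    induction m with
    | zero => simp
    | succ m ih =>
      intro t
      rw [Nat.cast_succ, ← add_assoc, hχ, ih, Function.iterate_succ_apply']
  exact ⟨χ (-n), by simpa using (hshift n (-n)).symm⟩

theorem mem_solSet_of_forall_mem_range_iterate [TopologicalSpace X] [CompactSpace X]
    [T2Space X] {f : X → X} (hf : Continuous f) {x : X} (hx : ∀ n, x ∈ range f^[n]) :
    x ∈ SolSet f := by
  let C : ℕ → Set (ℤ → X) := fun n =>
    {χ | χ 0 = x} ∩ ⋂ t ∈ Ici (-n : ℤ), {χ | χ (t + 1) = f (χ t)}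
  have hanti : ∀ n, C (n + 1) ⊆ C n := fun n =>
    inter_subset_inter_right _ (biInter_mono (Ici_subset_Ici.mpr (by omega)) fun _ _ => le_rfl)
  -- the forward orbit of an `n`-th preimage of `x`, frozen before time `-n`
  have hne : ∀ n, (C n).Nonempty := by
    intro n
    obtain ⟨y, hy⟩ := hx n
    refine ⟨fun t => f^[(t + n).toNat] y, by simpa using hy, mem_iInter₂.mpr fun t ht => ?_⟩
    have hsucc : (t + 1 + n).toNat = (t + n).toNat + 1 := by rw [mem_Ici] at ht; omega
    show f^[(t + 1 + n).toNat] y = f (f^[(t + n).toNat] y)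
    rw [hsucc, Function.iterate_succ_apply']
  have hclosed : ∀ n, IsClosed (C n) := fun n =>
    (isClosed_eq (continuous_apply 0) continuous_const).inter <| isClosed_biInter fun t _ =>
      isClosed_eq (continuous_apply _) (hf.comp (continuous_apply t))
  obtain ⟨χ, hχ⟩ := IsCompact.nonempty_iInter_of_sequence_nonempty_isCompact_isClosed
    C hanti hne (hclosed 0).isCompact hclosed
  rw [mem_iInter] at hχ
  exact ⟨χ, (hχ 0).1, fun t => mem_iInter₂.mp (hχ t.natAbs).2 t (mem_Ici.mpr (by omega))⟩

theorem solSet_eq_iInter_range_iterate [TopologicalSpace X] [CompactSpace X] [T2Space X]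
    {f : X → X} (hf : Continuous f) : SolSet f = ⋂ n, range f^[n] :=
  (subset_iInter (solSet_subset_range_iterate f)).antisymm
    fun _ hx => mem_solSet_of_forall_mem_range_iterate hf (mem_iInter.mp hx)

theorem iInter_range_iterate_eq_biInter_pos (f : X → X) :
    ⋂ n, range f^[n] = ⋂ n ∈ {n : ℕ | 1 ≤ n}, f^[n] '' univ := by
  simp only [image_univ]
  refine (subset_iInter₂ fun n _ => iInter_subset _ n).antisymm (subset_iInter fun n => ?_)
  exact (biInter_subset_of_mem (Nat.le_add_left 1 n)).trans (antitone_range_iterate f n.le_succ)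

end Solutions

theorem upperHemiAt_solSet {Z X : Type*} [TopologicalSpace Z] [TopologicalSpace X]
    [CompactSpace X] [T2Space X] {Φ : Z → X → X} (hΦ : Continuous fun p : X × Z => Φ p.2 p.1)
    (z : Z) : UpperHemiAt (fun z' => SolSet (Φ z')) z := by
  intro U hU hSU
  have hcont : Continuous (Φ z) := hΦ.comp (Continuous.prodMk_left z)
  obtain ⟨n, hn⟩ := exists_range_iterate_subset hcont hU
    (solSet_eq_iInter_range_iterate hcont ▸ hSU)
  have hnear : ∀ᶠ z' in 𝓝 z, ∀ x ∈ univ, (Φ z')^[n] x ∈ U :=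
    isCompact_univ.eventually_forall_of_forall_eventually fun x _ =>
      ((continuous_iterate_uncurry hΦ n).comp continuous_swap).continuousAt.preimage_mem_nhds
        (hU.mem_nhds (hn ⟨x, rfl⟩))
  obtain ⟨V₀, hV₀, hV₀o, hzV₀⟩ := eventually_nhds_iff.mp hnear
  refine ⟨V₀, hV₀o, hzV₀, fun z' hz' x hx => ?_⟩
  obtain ⟨y, rfl⟩ := solSet_subset_range_iterate _ n hx
  exact hV₀ z' hz' y trivial

theorem stmt8_general {𝒵 𝔛c : Type*} [TopologicalSpace 𝒵]
    [TopologicalSpace 𝔛c] [PolishSpace 𝔛c] [CompactSpace 𝔛c]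
    (Φ : 𝒵 → 𝔛c → 𝔛c)
    (hΦ : Continuous fun p : 𝔛c × 𝒵 => Φ p.2 p.1) :
    -- S_{Φ_z} = ⋂_{n ≥ 1} Φ_zⁿ(𝔛c) for every z
    (∀ z : 𝒵, SolSet (Φ z) = ⋂ n ∈ {n : ℕ | 1 ≤ n}, (Φ z)^[n] '' Set.univ) ∧
    -- the set of points where z ↦ S_{Φ_z} is hemi-continuous is residual
    {z : 𝒵 | HemiAt (fun z' : 𝒵 => SolSet (Φ z')) z} ∈ residual 𝒵 := by
  refine ⟨fun z => ?_, ?_⟩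
  · rw [← iInter_range_iterate_eq_biInter_pos]
    exact solSet_eq_iInter_range_iterate (hΦ.comp (Continuous.prodMk_left z))
  · have hupper := upperHemiAt_solSet hΦ
    filter_upwards [setOf_lowerHemiAt_mem_residual_s8
      fun C hC => isClosed_setOf_inter_nonempty_of_upperHemiAt hupper hC] with z hz
    exact ⟨hupper z, hz⟩

theorem stmt8 {𝒵 𝔛c : Type*} [TopologicalSpace 𝒵] [PolishSpace 𝒵]
    [TopologicalSpace 𝔛c] [PolishSpace 𝔛c] [CompactSpace 𝔛c]
    (Φ : 𝒵 → 𝔛c → 𝔛c)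
    (hΦ : Continuous fun p : 𝔛c × 𝒵 => Φ p.2 p.1) :
    -- S_{Φ_z} = ⋂_{n ≥ 1} Φ_zⁿ(𝔛c) for every z
    (∀ z : 𝒵, SolSet (Φ z) = ⋂ n ∈ {n : ℕ | 1 ≤ n}, (Φ z)^[n] '' Set.univ) ∧
    -- the set of points where z ↦ S_{Φ_z} is hemi-continuous is residual
    {z : 𝒵 | HemiAt (fun z' : 𝒵 => SolSet (Φ z')) z} ∈ residual 𝒵 :=
  stmt8_general Φ hΦ
end

section
/- Let 𝒴 and 𝒵₋ be Hausdorff topological spaces and O : 𝒵₋ → 2^𝒴 a set-valued map that is lower hemi-continuous at a point z₋ ∈ 𝒵₋. If (z₋^i)_{i∈I} is a net in 𝒵₋ converging to z₋, then #O(z₋) ≤ limsup_{i∈I} #O(z₋^i), where cardinalities are taken in ℕ₀ ∪ {∞}. -/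
open Set Filter Topology

theorem stmt9 {𝒴 𝒵m : Type*} [TopologicalSpace 𝒴] [TopologicalSpace 𝒵m]
    [T2Space 𝒴] [T2Space 𝒵m]
    (O : 𝒵m → Set 𝒴) (zm : 𝒵m)
    (hlh : LowerHemiAt O zm)
    -- a net (z i) indexed by a nonempty directed preorder, converging to zm
    {ι : Type*} [Nonempty ι] [Preorder ι] [IsDirected ι (· ≤ ·)]
    (z : ι → 𝒵m) (hz : Filter.Tendsto z Filter.atTop (nhds zm)) :
    (O zm).encard ≤ Filter.limsup (fun i => (O (z i)).encard) Filter.atTop := by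
  classical
  refine le_of_forall_lt fun c hc => ?_
  have hcne : c ≠ ⊤ := (hc.trans_le le_top).ne
  lift c to ℕ using hcne
  have hsucc : ((c + 1 : ℕ) : ℕ∞) ≤ (O zm).encard := by
    exact_mod_cast Order.add_one_le_of_lt hc
  obtain ⟨t, hts, htc⟩ := Set.exists_subset_encard_eq hsucc
  have htfin : t.Finite := Set.finite_of_encard_eq_coe htc
  obtain ⟨U, hU, hUdisj⟩ := htfin.t2_separation
  -- choose neighborhoods from lower hemicontinuity
  have hsel : ∀ y : 𝒴, ∃ V₀ : Set 𝒵m, IsOpen V₀ ∧ zm ∈ V₀ ∧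
      (y ∈ t → ∀ v' ∈ V₀, (U y ∩ O v').Nonempty) := by
    intro y
    by_cases hy : y ∈ t
    · obtain ⟨V₀, h1, h2, h3⟩ := hlh (U y) (hU y).2 ⟨y, (hU y).1, hts hy⟩
      exact ⟨V₀, h1, h2, fun _ => h3⟩
    · exact ⟨Set.univ, isOpen_univ, Set.mem_univ _, fun h => absurd h hy⟩
  choose V hVo hVm hVne using hsel
  set N : Set 𝒵m := ⋂ y ∈ t, V y with hN
  have hNopen : IsOpen N := htfin.isOpen_biInter fun y _ => hVo y
  have hNmem : zm ∈ N := Set.mem_iInter₂.2 fun y _ => hVm y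
  have hev : ∀ᶠ i in Filter.atTop, z i ∈ N := hz (hNopen.mem_nhds hNmem)
  have key : ∀ᶠ i in Filter.atTop, ((c + 1 : ℕ) : ℕ∞) ≤ (O (z i)).encard := by
    filter_upwards [hev] with i hi
    have hnon : ∀ y ∈ t, (U y ∩ O (z i)).Nonempty := fun y hy =>
      hVne y hy (z i) (Set.mem_iInter₂.1 hi y hy)
    set w : 𝒴 → 𝒴 := fun y =>
      if h : (U y ∩ O (z i)).Nonempty then h.some else y with hw
    have hwmem : ∀ y ∈ t, w y ∈ U y ∩ O (z i) := by
      intro y hy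
      simp only [hw, dif_pos (hnon y hy)]
      exact (hnon y hy).some_mem
    have hinj : Set.InjOn w t := by
      intro a ha b hb hab
      by_contra hne
      have hd := hUdisj ha hb hne
      exact (hd.le_bot ⟨by simpa using (hwmem a ha).1,
        by rw [hab]; simpa using (hwmem b hb).1⟩ : (w a) ∈ (⊥ : Set 𝒴))
    calc ((c + 1 : ℕ) : ℕ∞) = t.encard := htc.symm
      _ = (w '' t).encard := (hinj.encard_image).symm
      _ ≤ (O (z i)).encard :=
          Set.encard_le_encard (by rintro _ ⟨y, hy, rfl⟩; exact (hwmem y hy).2)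
  have hle : ((c + 1 : ℕ) : ℕ∞) ≤ Filter.limsup (fun i => (O (z i)).encard) Filter.atTop :=
    Filter.le_limsup_of_frequently_le' key.frequently
  exact lt_of_lt_of_le (by exact_mod_cast Nat.lt_succ_self c) hle
end

section
/- Suppose Φ admits a continuous left-inverse Θ : 𝔛 → 𝔛 (Θ ∘ Φ = id), and suppose there are maps τ : 𝒵 → 𝒵₋ and η : 𝔛 → 𝒴 into Hausdorff spaces 𝒵₋ and 𝒴 (𝒵₋ carrying a topology) and a subset 𝔛∞ ⊆ 𝔛 with Θ(𝔛∞) ⊆ 𝔛∞ such that: (i) for any x, x′ ∈ S_Φ ∩ 𝔛∞, if η(Θ(x)) = η(Θ(x′)) and π(x) = π(x′), then η(x) = η(x′); (ii) for any z, z′ ∈ 𝒵 with τ(z) = τ(z′), η(S_Φ ∩ 𝔛∞ ∩ π⁻¹(z)) = η(S_Φ ∩ 𝔛∞ ∩ π⁻¹(z′)); (iii) for all z₋, z₋′ ∈ 𝒵₋ there exist nets (z_i)_{i∈I} in 𝒵 and (k_i)_{i∈I} in ℕ₀ (over the same directed set I) such that τ(z_i) → z₋ and τ(φ^{−k_i}(z_i))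 = z₋′ for all i ∈ I. Define O(z₋) := η(S_Φ ∩ 𝔛∞ ∩ (τ ∘ π)⁻¹(z₋)) and let 𝒵₋* ⊆ 𝒵₋ be the set of points at which O is lower hemi-continuous. Then #O(z₋) ≤ #O(z₋′) for every z₋ ∈ 𝒵₋* and every z₋′ ∈ 𝒵₋; in particular, z₋ ↦ #O(z₋) is constant on 𝒵₋*. -/
open Set Filter Topology

universe u₁ u₂ u₃ u₄ u₅

section Aux

variable {𝔛 : Type u₁} {𝒵 : Type u₂} {𝒵m : Type u₃} {𝒴 : Type u₄}

/-- `Θ` preserves the solution set, and moves the base point backwards. -/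
lemma aux_theta_sol (π : 𝔛 → 𝒵) (φ : 𝒵 → 𝒵) (Φ Θ : 𝔛 → 𝔛)
    (hbundle : π ∘ Φ = φ ∘ π) (hΘΦ : Θ ∘ Φ = id) {x : 𝔛} (hx : x ∈ SolSet Φ) :
    Θ x ∈ SolSet Φ ∧ φ (π (Θ x)) = π x := by
  obtain ⟨χ, hχ0, hχ⟩ := hx
  have hx1 : x = Φ (χ (-1)) := by
    rw [← hχ0]
    have h := hχ (-1)
    norm_num at h
    exact h
  have hΘx : Θ x = χ (-1) := by
    rw [hx1]
    exact congrFun hΘΦ (χ (-1))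
  refine ⟨⟨fun t => χ (t - 1), by rw [hΘx]; norm_num, fun t => ?_⟩, ?_⟩
  · show χ (t + 1 - 1) = Φ (χ (t - 1))
    have h := hχ (t - 1)
    rw [sub_add_cancel] at h
    rw [add_sub_cancel_right]
    exact h
  · rw [hΘx, hx1]
    exact (congrFun hbundle (χ (-1))).symm

/-- One-step cardinality inequality between fibers. -/
lemma aux_step (π : 𝔛 → 𝒵) (φ : 𝒵 → 𝒵) (hφb : Function.Bijective φ)
    (Φ Θ : 𝔛 → 𝔛) (hbundle : π ∘ Φ = φ ∘ π) (hΘΦ : Θ ∘ Φ = id)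
    (η : 𝔛 → 𝒴) (Xinf : Set 𝔛) (hXinf : Θ '' Xinf ⊆ Xinf)
    (h1 : ∀ x ∈ SolSet Φ ∩ Xinf, ∀ x' ∈ SolSet Φ ∩ Xinf,
      η (Θ x) = η (Θ x') → π x = π x' → η x = η x')
    (z : 𝒵) :
    (η '' (SolSet Φ ∩ Xinf ∩ π ⁻¹' {φ z})).encard ≤
      (η '' (SolSet Φ ∩ Xinf ∩ π ⁻¹' {z})).encard := by
  classical
  rcases Set.eq_empty_or_nonempty (η '' (SolSet Φ ∩ Xinf ∩ π ⁻¹' {φ z})) with hA | hA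
  · rw [hA]; simp
  have hX : Nonempty 𝔛 := by
    obtain ⟨y, x, _, _⟩ := hA
    exact ⟨x⟩
  have hch : ∀ y ∈ η '' (SolSet Φ ∩ Xinf ∩ π ⁻¹' {φ z}),
      ∃ x, x ∈ SolSet Φ ∩ Xinf ∩ π ⁻¹' {φ z} ∧ η x = y := fun y hy => hy
  choose! ξ hξ1 hξ2 using hch
  apply Set.encard_le_encard_of_injOn (f := fun y => η (Θ (ξ y)))
  · intro y hy
    obtain ⟨⟨hsol, hinf⟩, hfib⟩ := hξ1 y hy
    have hth := aux_theta_sol π φ Φ Θ hbundle hΘΦ hsol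
    refine ⟨Θ (ξ y), ⟨⟨hth.1, hXinf ⟨_, hinf, rfl⟩⟩, ?_⟩, rfl⟩
    have hfib' : π (ξ y) = φ z := hfib
    have : φ (π (Θ (ξ y))) = φ z := by rw [hth.2]; exact hfib'
    exact hφb.1 this
  · intro y hy y' hy' hff
    have hπ : π (ξ y) = π (ξ y') := by
      have hf1 : π (ξ y) = φ z := (hξ1 y hy).2
      have hf2 : π (ξ y') = φ z := (hξ1 y' hy').2
      rw [hf1, hf2]
    have := h1 (ξ y) (hξ1 y hy).1 (ξ y') (hξ1 y' hy').1 hff hπ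
    rw [hξ2 y hy, hξ2 y' hy'] at this
    exact this

/-- Iterated cardinality inequality. -/
lemma aux_iter (π : 𝔛 → 𝒵) (φ : 𝒵 → 𝒵) (hφb : Function.Bijective φ)
    (Φ Θ : 𝔛 → 𝔛) (hbundle : π ∘ Φ = φ ∘ π) (hΘΦ : Θ ∘ Φ = id)
    (η : 𝔛 → 𝒴) (Xinf : Set 𝔛) (hXinf : Θ '' Xinf ⊆ Xinf)
    (h1 : ∀ x ∈ SolSet Φ ∩ Xinf, ∀ x' ∈ SolSet Φ ∩ Xinf,
      η (Θ x) = η (Θ x') → π x = π x' → η x = η x')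
    (k : ℕ) (w : 𝒵) :
    (η '' (SolSet Φ ∩ Xinf ∩ π ⁻¹' {φ^[k] w})).encard ≤
      (η '' (SolSet Φ ∩ Xinf ∩ π ⁻¹' {w})).encard := by
  induction k with
  | zero => simp
  | succ k ih =>
    rw [Function.iterate_succ_apply']
    exact (aux_step π φ hφb Φ Θ hbundle hΘΦ η Xinf hXinf h1 (φ^[k] w)).trans ih

/-- The set `O (τ z)` equals the image of a single fiber over `z`. -/
lemma aux_O_eq (π : 𝔛 → 𝒵) (τ : 𝒵 → 𝒵m) (Φ : 𝔛 → 𝔛) (η : 𝔛 → 𝒴) (Xinf : Set 𝔛)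
    (h2 : ∀ z z' : 𝒵, τ z = τ z' →
      η '' (SolSet Φ ∩ Xinf ∩ π ⁻¹' {z}) = η '' (SolSet Φ ∩ Xinf ∩ π ⁻¹' {z'}))
    (z : 𝒵) :
    η '' (SolSet Φ ∩ Xinf ∩ (τ ∘ π) ⁻¹' {τ z}) = η '' (SolSet Φ ∩ Xinf ∩ π ⁻¹' {z}) := by
  ext y
  constructor
  · rintro ⟨x, ⟨hx, hfib⟩, rfl⟩
    have hfib' : τ (π x) = τ z := hfib
    rw [← h2 (π x) z hfib']
    exact ⟨x, ⟨hx, rfl⟩, rfl⟩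
  · rintro ⟨x, ⟨hx, hfib⟩, rfl⟩
    have hfib' : π x = z := hfib
    exact ⟨x, ⟨hx, show τ (π x) = τ z by rw [hfib']⟩, rfl⟩

end Aux

theorem stmt10 {𝔛 : Type u₁} {𝒵 : Type u₂} {𝒵m : Type u₃} {𝒴 : Type u₄}
    [TopologicalSpace 𝔛] [TopologicalSpace 𝒵] [TopologicalSpace 𝒵m] [TopologicalSpace 𝒴]
    [T2Space 𝔛] [T2Space 𝒵] [T2Space 𝒵m] [T2Space 𝒴]
    (π : 𝔛 → 𝒵) (hπ : Continuous π)
    (φ : 𝒵 → 𝒵) (hφc : Continuous φ) (hφb : Function.Bijective φ)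
    (Φ : 𝔛 → 𝔛) (hΦc : Continuous Φ) (hbundle : π ∘ Φ = φ ∘ π)
    -- a continuous left-inverse Θ of Φ
    (Θ : 𝔛 → 𝔛) (hΘc : Continuous Θ) (hΘΦ : Θ ∘ Φ = id)
    (τ : 𝒵 → 𝒵m) (η : 𝔛 → 𝒴)
    -- 𝔛∞ is forward-invariant under Θ
    (Xinf : Set 𝔛) (hXinf : Θ '' Xinf ⊆ Xinf)
    -- (i)
    (h1 : ∀ x ∈ SolSet Φ ∩ Xinf, ∀ x' ∈ SolSet Φ ∩ Xinf,
      η (Θ x) = η (Θ x') → π x = π x' → η x = η x')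
    -- (ii)
    (h2 : ∀ z z' : 𝒵, τ z = τ z' →
      η '' (SolSet Φ ∩ Xinf ∩ π ⁻¹' {z}) = η '' (SolSet Φ ∩ Xinf ∩ π ⁻¹' {z'}))
    -- (iii): nets (z i) in 𝒵 and (k i) in ℕ, over the same directed set, with
    -- τ(z i) → z₋ and τ(φ^{−k i}(z i)) = z₋′ (the latter phrased as: there are
    -- points w i with φ^[k i] (w i) = z i and τ (w i) = z₋′)
    (h3 : ∀ zm zm' : 𝒵m, ∃ (ι : Type u₅) (_ : Nonempty ι) (_ : Preorder ι)
      (_ : IsDirected ι (· ≤ ·)) (z : ι → 𝒵) (k : ι → ℕ) (w : ι → 𝒵),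
      Filter.Tendsto (fun i => τ (z i)) Filter.atTop (nhds zm) ∧
      (∀ i, φ^[k i] (w i) = z i) ∧ (∀ i, τ (w i) = zm')) :
    -- with O(z₋) := η(S_Φ ∩ 𝔛∞ ∩ (τ∘π)⁻¹(z₋)) and 𝒵₋* the lower hemi-continuity points:
    (∀ zm ∈ {zm : 𝒵m |
        LowerHemiAt (fun zm' : 𝒵m => η '' (SolSet Φ ∩ Xinf ∩ (τ ∘ π) ⁻¹' {zm'})) zm},
      ∀ zm' : 𝒵m,
        (η '' (SolSet Φ ∩ Xinf ∩ (τ ∘ π) ⁻¹' {zm})).encard ≤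
          (η '' (SolSet Φ ∩ Xinf ∩ (τ ∘ π) ⁻¹' {zm'})).encard) ∧
    (∀ zm ∈ {zm : 𝒵m |
        LowerHemiAt (fun zm' : 𝒵m => η '' (SolSet Φ ∩ Xinf ∩ (τ ∘ π) ⁻¹' {zm'})) zm},
      ∀ zm' ∈ {zm : 𝒵m |
        LowerHemiAt (fun zm'' : 𝒵m => η '' (SolSet Φ ∩ Xinf ∩ (τ ∘ π) ⁻¹' {zm''})) zm},
        (η '' (SolSet Φ ∩ Xinf ∩ (τ ∘ π) ⁻¹' {zm})).encard =
          (η '' (SolSet Φ ∩ Xinf ∩ (τ ∘ π) ⁻¹' {zm'})).encard) := by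
  classical
  set O : 𝒵m → Set 𝒴 := fun zm => η '' (SolSet Φ ∩ Xinf ∩ (τ ∘ π) ⁻¹' {zm}) with hO
  have main : ∀ zm ∈ {zm : 𝒵m | LowerHemiAt O zm}, ∀ zm' : 𝒵m,
      (O zm).encard ≤ (O zm').encard := by
    intro zm hlhc zm'
    by_contra hlt
    push_neg at hlt
    -- (O zm').encard is finite
    have hne : (O zm').encard ≠ ⊤ := ne_top_of_lt hlt
    obtain ⟨n, hn⟩ : ∃ n : ℕ, (O zm').encard = n := by
      lift (O zm').encard to ℕ using hne with n hn
      exact ⟨n, rfl⟩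
    -- get a finite subset of O zm of cardinality n + 1
    have hn1 : ((n : ℕ∞) + 1) ≤ (O zm).encard := by
      rw [ENat.add_one_le_iff (by simp)]
      rw [← hn]; exact hlt
    obtain ⟨F, hFsub, hFcard⟩ := Set.exists_subset_encard_eq hn1
    have hFfin : F.Finite := by
      apply Set.finite_of_encard_eq_coe (k := n + 1)
      rw [hFcard]; push_cast; ring
    -- disjoint open neighborhoods
    obtain ⟨U, hU, hUdisj⟩ := hFfin.t2_separation
    -- lower hemi-continuity gives neighborhoods in 𝒵m
    have hV : ∀ y ∈ F, ∃ V₀ : Set 𝒵m, IsOpen V₀ ∧ zm ∈ V₀ ∧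
        ∀ v ∈ V₀, (U y ∩ O v).Nonempty := by
      intro y hy
      exact hlhc (U y) (hU y).2 ⟨y, (hU y).1, hFsub hy⟩
    choose! V hVo hVmem hVne using hV
    set Vall : Set 𝒵m := ⋂ y ∈ F, V y with hVall
    have hVallo : IsOpen Vall := hFfin.isOpen_biInter hVo
    have hVallmem : zm ∈ Vall := Set.mem_biInter fun y hy => hVmem y hy
    -- the net from (iii)
    obtain ⟨ι, hι, hpre, hdir, z, k, w, htend, hzw, hτw⟩ := h3 zm zm'
    have hev : ∀ᶠ i in (Filter.atTop : Filter ι), τ (z i) ∈ Vall :=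
      htend (hVallo.mem_nhds hVallmem)
    have : (Filter.atTop : Filter ι).NeBot := Filter.atTop_neBot
    obtain ⟨i, hi⟩ := hev.exists
    -- F injects into O (τ (z i))
    have hpick : ∀ y ∈ F, ∃ p, p ∈ U y ∩ O (τ (z i)) := by
      intro y hy
      exact hVne y hy (τ (z i)) (Set.mem_iInter₂.1 hi y hy)
    choose! g hg using hpick
    have hinj : Set.InjOn g F := by
      intro y hy y' hy' hgg
      by_contra hne'
      have hd := hUdisj hy hy' hne'
      exact (Set.disjoint_left.1 hd) (hg y hy).1 (hgg ▸ (hg y' hy').1)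
    have hmaps : Set.MapsTo g F (O (τ (z i))) := fun y hy => (hg y hy).2
    have hle1 : ((n : ℕ∞) + 1) ≤ (O (τ (z i))).encard := by
      rw [← hFcard]
      exact Set.encard_le_encard_of_injOn hmaps hinj
    -- transfer down the fiber chain
    have hOz : O (τ (z i)) = η '' (SolSet Φ ∩ Xinf ∩ π ⁻¹' {z i}) :=
      aux_O_eq π τ Φ η Xinf h2 (z i)
    have hOw : O (τ (w i)) = η '' (SolSet Φ ∩ Xinf ∩ π ⁻¹' {w i}) :=
      aux_O_eq π τ Φ η Xinf h2 (w i)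
    have hle2 : (O (τ (z i))).encard ≤ (O zm').encard := by
      rw [hOz, ← hτw i, hOw, ← hzw i]
      exact aux_iter π φ hφb Φ Θ hbundle hΘΦ η Xinf hXinf h1 (k i) (w i)
    have : ((n : ℕ∞) + 1) ≤ (n : ℕ∞) := by
      calc ((n : ℕ∞) + 1) ≤ (O (τ (z i))).encard := hle1
        _ ≤ (O zm').encard := hle2
        _ = n := hn
    exact absurd ((ENat.add_one_le_iff (ENat.coe_ne_top n)).1 this) (lt_irrefl _)
  exact ⟨main, fun zm hzm zm' hzm' =>
    le_antisymm (main zm hzm zm') (main zm' hzm' zm)⟩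
end

section
/- Suppose π is proper and Φ has the unique solution property (USP), and suppose in addition that 𝔛 is compact or that Φ admits a continuous left-inverse. Then S_Φ = ⋂_{n≥1} Φⁿ(𝔛), and the map 𝒵 → 𝔛 assigning to each z the unique point of S_Φ ∩ π⁻¹(z) is continuous. -/
open Set Filter Topology

theorem stmt11 {𝔛 𝒵 : Type*} [TopologicalSpace 𝔛] [TopologicalSpace 𝒵]
    [T2Space 𝔛] [T2Space 𝒵]
    (π : 𝔛 → 𝒵) (hπ : Continuous π)
    (φ : 𝒵 → 𝒵) (hφc : Continuous φ) (hφb : Function.Bijective φ)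
    (Φ : 𝔛 → 𝔛) (hΦc : Continuous Φ) (hbundle : π ∘ Φ = φ ∘ π)
    -- π is proper: a closed map with compact fibers
    (hπclosed : IsClosedMap π) (hπfib : ∀ z : 𝒵, IsCompact (π ⁻¹' {z}))
    -- unique solution property
    (hUSP : ∀ z : 𝒵, ∃! x : 𝔛, x ∈ SolSet Φ ∧ π x = z)
    -- 𝔛 compact or Φ admits a continuous left-inverse
    (hor : CompactSpace 𝔛 ∨ ∃ Θ : 𝔛 → 𝔛, Continuous Θ ∧ Θ ∘ Φ = id) :
    -- S_Φ = ⋂_{n ≥ 1} Φⁿ(𝔛)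
    SolSet Φ = (⋂ n ∈ {n : ℕ | 1 ≤ n}, Φ^[n] '' Set.univ) ∧
    -- and the selection map z ↦ the unique point of S_Φ ∩ π⁻¹(z) is continuous
    (∀ s : 𝒵 → 𝔛, (∀ z : 𝒵, s z ∈ SolSet Φ ∧ π (s z) = z) → Continuous s) := by
  classical
  set K : Set 𝔛 := ⋂ n ∈ {n : ℕ | 1 ≤ n}, Φ^[n] '' Set.univ with hKdef
  have hmemK : ∀ x, x ∈ K ↔ ∀ n : ℕ, x ∈ Φ^[n+1] '' Set.univ := by
    intro x
    simp only [hKdef, mem_iInter, mem_setOf_eq]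
    constructor
    · intro h n; exact h (n+1) (by omega)
    · intro h n hn
      obtain ⟨m, rfl⟩ : ∃ m, n = m + 1 := ⟨n - 1, by omega⟩
      exact h m
  have hmono : ∀ n : ℕ, Φ^[n+1] '' Set.univ ⊆ Φ^[n] '' Set.univ := by
    rintro n x ⟨w, -, rfl⟩
    exact ⟨Φ w, trivial, (Function.iterate_succ_apply Φ n w).symm⟩
  -- Φ maps K onto K
  have hsurj : ∀ x ∈ K, ∃ y ∈ K, Φ y = x := by
    intro x hx
    rcases hor with hcomp | ⟨Θ, hΘc, hΘΦ⟩
    · haveI := hcomp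
      set F : ℕ → Set 𝔛 := fun n => Φ^[n+1] '' Set.univ ∩ Φ ⁻¹' {x} with hF
      have hclosed : ∀ n, IsClosed (F n) := fun n =>
        ((isCompact_univ.image (hΦc.iterate (n+1))).isClosed).inter
          (isClosed_singleton.preimage hΦc)
      have hcpt : IsCompact (F 0) := (hclosed 0).isCompact
      have hne : ∀ n, (F n).Nonempty := by
        intro n
        obtain ⟨w, -, hw⟩ := (hmemK x).1 hx (n+1)
        refine ⟨Φ^[n+1] w, ⟨w, trivial, rfl⟩, ?_⟩
        simp only [mem_preimage, mem_singleton_iff]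
        rw [← hw]
        exact (Function.iterate_succ_apply' Φ (n+1) w).symm
      have hdec : ∀ n, F (n+1) ⊆ F n := fun n =>
        inter_subset_inter_left _ (hmono (n+1))
      obtain ⟨y, hy⟩ := IsCompact.nonempty_iInter_of_sequence_nonempty_isCompact_isClosed
        F hdec hne hcpt hclosed
      simp only [mem_iInter, hF, mem_inter_iff, mem_preimage, mem_singleton_iff] at hy
      refine ⟨y, (hmemK y).2 fun n => (hy n).1, (hy 0).2⟩
    · have hΘΦ' : ∀ a, Θ (Φ a) = a := fun a => congrFun hΘΦ a
      refine ⟨Θ x, ?_, ?_⟩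
      · rw [hmemK]
        intro n
        obtain ⟨w, -, hw⟩ := (hmemK x).1 hx (n+1)
        have hx' : Θ x = Φ^[n+1] w := by
          rw [← hw, Function.iterate_succ_apply', hΘΦ']
        exact ⟨w, trivial, hx'.symm⟩
      · obtain ⟨z, -, hz⟩ := (hmemK x).1 hx 0
        rw [← hz]
        simp [hΘΦ']
  -- K ⊆ SolSet
  have hKsub : K ⊆ SolSet Φ := by
    intro x hx
    let b : K → K := fun k => ⟨(hsurj k k.2).choose, (hsurj k k.2).choose_spec.1⟩
    have hb : ∀ k : K, Φ (b k : 𝔛) = k := fun k => (hsurj k k.2).choose_spec.2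
    let u : ℕ → K := fun n => Nat.rec (motive := fun _ => K) ⟨x, hx⟩ (fun _ p => b p) n
    have hu0 : (u 0 : 𝔛) = x := rfl
    have hus : ∀ n, Φ (u (n+1) : 𝔛) = u n := fun n => hb (u n)
    let χ : ℤ → 𝔛 := fun t => match t with
      | .ofNat n => Φ^[n] x
      | .negSucc n => (u (n+1) : 𝔛)
    refine ⟨χ, ?_, ?_⟩
    · show Φ^[0] x = x
      rfl
    intro t
    cases t with
    | ofNat n =>
      have h1 : (Int.ofNat n) + 1 = Int.ofNat (n+1) := rfl
      rw [h1]
      show Φ^[n+1] x = Φ (Φ^[n] x)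
      exact Function.iterate_succ_apply' Φ n x
    | negSucc n =>
      cases n with
      | zero =>
        have h1 : (Int.negSucc 0) + 1 = Int.ofNat 0 := rfl
        rw [h1]
        show Φ^[0] x = Φ (u 1 : 𝔛)
        exact ((hus 0).trans hu0).symm
      | succ m =>
        have h1 : (Int.negSucc (m+1)) + 1 = Int.negSucc m := rfl
        rw [h1]
        show (u (m+1) : 𝔛) = Φ (u (m+2) : 𝔛)
        exact (hus (m+1)).symm
  -- SolSet ⊆ K
  have hsol_sub : SolSet Φ ⊆ K := by
    rintro x ⟨χ, hχ0, hχ⟩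
    rw [hmemK]
    intro n
    have key : ∀ (m : ℕ) (t : ℤ), χ (t + m) = Φ^[m] (χ t) := by
      intro m
      induction m with
      | zero => intro t; simp
      | succ k ih =>
        intro t
        have h2 : (t + (k+1 : ℕ) : ℤ) = (t + k) + 1 := by push_cast; ring
        rw [h2, hχ, ih]
        exact (Function.iterate_succ_apply' Φ k (χ t)).symm
    refine ⟨χ (-((n+1 : ℕ) : ℤ)), trivial, ?_⟩
    have := (key (n+1) (-((n+1 : ℕ) : ℤ))).symm
    rw [this, show (-(((n+1 : ℕ)) : ℤ) + ((n+1 : ℕ) : ℤ)) = 0 from by ring]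
    exact hχ0
  have hKeq : SolSet Φ = K := Subset.antisymm hsol_sub hKsub
  -- K is closed
  have hKclosed : IsClosed K := by
    rcases hor with hcomp | ⟨Θ, hΘc, hΘΦ⟩
    · haveI := hcomp
      exact isClosed_biInter fun n _ => (isCompact_univ.image (hΦc.iterate n)).isClosed
    · have hΘΦ1 : ∀ a, Θ (Φ a) = a := fun a => congrFun hΘΦ a
      have hΘΦ' : ∀ (n : ℕ) (a : 𝔛), Θ^[n] (Φ^[n] a) = a := by
        intro n
        induction n with
        | zero => intro a; simp
        | succ m ih =>
          intro a
          rw [Function.iterate_succ_apply' Φ, Function.iterate_succ_apply Θ, hΘΦ1]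
          exact ih a
      refine isClosed_biInter fun n _ => ?_
      have hset : Φ^[n] '' Set.univ = {x | Φ^[n] (Θ^[n] x) = x} := by
        ext y
        simp only [image_univ, mem_range, mem_setOf_eq]
        constructor
        · rintro ⟨w, rfl⟩; rw [hΘΦ' n w]
        · intro h; exact ⟨Θ^[n] y, h⟩
      rw [hset]
      exact isClosed_eq ((hΦc.iterate n).comp (hΘc.iterate n)) continuous_id
  refine ⟨hKeq, ?_⟩
  intro s hs
  have hSclosed : IsClosed (SolSet Φ) := hKeq ▸ hKclosed
  rw [continuous_iff_isClosed]
  intro C hC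
  have himg : s ⁻¹' C = π '' (SolSet Φ ∩ C) := by
    ext z
    simp only [mem_preimage, mem_image, mem_inter_iff]
    constructor
    · intro h; exact ⟨s z, ⟨(hs z).1, h⟩, (hs z).2⟩
    · rintro ⟨x, ⟨hxS, hxC⟩, rfl⟩
      have heq : s (π x) = x := (hUSP (π x)).unique ⟨(hs (π x)).1, (hs (π x)).2⟩ ⟨hxS, rfl⟩
      rw [heq]; exact hxC
  rw [himg]
  exact hπclosed _ (hSclosed.inter hC)
end

section
/- Under the structured setup, if the restriction of π to 𝔛₀ has compact fibers (𝔛₀ ∩ π⁻¹(z) is compact for every z ∈ 𝒵), then S_Φ ∩ 𝔛∞ ∩ π⁻¹(z) ≠ ∅ for every z ∈ 𝒵. In particular, if Φ has the unique solution property (USP), then S_Φ ⊆ 𝔛∞. -/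
open Set Filter Topology

theorem stmt13 {𝔛 𝒵 : Type*} [TopologicalSpace 𝔛] [TopologicalSpace 𝒵]
    [T2Space 𝔛] [T2Space 𝒵]
    (π : 𝔛 → 𝒵) (hπ : Continuous π)
    (φ : 𝒵 → 𝒵) (hφc : Continuous φ) (hφb : Function.Bijective φ)
    (Φ : 𝔛 → 𝔛) (hΦc : Continuous Φ) (hbundle : π ∘ Φ = φ ∘ π)
    -- structured setup: a continuous left-inverse Θ of Φ which is a bundle map
    -- over φ⁻¹ (phrased as φ ∘ π ∘ Θ = π), and a forward-invariant set 𝔛₀ with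
    -- closed non-empty fibers
    (Θ : 𝔛 → 𝔛) (hΘc : Continuous Θ) (hΘΦ : Θ ∘ Φ = id)
    (hΘbundle : φ ∘ (π ∘ Θ) = π)
    (X0 : Set 𝔛) (hX0inv : Φ '' X0 ⊆ X0)
    (hX0closed : ∀ z : 𝒵, IsClosed (X0 ∩ π ⁻¹' {z}))
    (hX0ne : ∀ z : 𝒵, (X0 ∩ π ⁻¹' {z}).Nonempty)
    -- 𝔛∞ := ⋂_{n ≥ 0} (Θⁿ)⁻¹(𝔛₀)
    (Xinf : Set 𝔛) (hXinf : Xinf = ⋂ n : ℕ, Θ^[n] ⁻¹' X0)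
    -- the restriction of π to 𝔛₀ has compact fibers
    (hX0cpt : ∀ z : 𝒵, IsCompact (X0 ∩ π ⁻¹' {z})) :
    -- S_Φ ∩ 𝔛∞ has non-empty fibers
    (∀ z : 𝒵, (SolSet Φ ∩ Xinf ∩ π ⁻¹' {z}).Nonempty) ∧
    -- in particular, under the USP, S_Φ ⊆ 𝔛∞
    ((∀ z : 𝒵, ∃! x : 𝔛, x ∈ SolSet Φ ∧ π x = z) → SolSet Φ ⊆ Xinf) := by
  have hbun : ∀ x, π (Φ x) = φ (π x) := fun x => congrFun hbundle x
  have hΘΦ' : ∀ x, Θ (Φ x) = x := fun x => congrFun hΘΦ x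
  -- inverse of φ
  set e := Equiv.ofBijective φ hφb with he
  have heφ : ∀ u, φ (e.symm u) = u := fun u => e.apply_symm_apply u
  -- Θ^[n] ∘ Φ^[n] = id
  have hΘnΦn : ∀ (n : ℕ) (y : 𝔛), Θ^[n] (Φ^[n] y) = y := by
    intro n
    induction n with
    | zero => intro y; simp
    | succ n ih =>
      intro y
      rw [Function.iterate_succ_apply' Φ, Function.iterate_succ_apply Θ, hΘΦ', ih]
  -- π ∘ Φ^[n] = φ^[n] ∘ π
  have hπΦn : ∀ (n : ℕ) (y : 𝔛), π (Φ^[n] y) = φ^[n] (π y) := by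
    intro n
    induction n with
    | zero => intro y; simp
    | succ n ih =>
      intro y
      rw [Function.iterate_succ_apply' Φ, Function.iterate_succ_apply' φ, hbun, ih]
  have hφψ : ∀ (n : ℕ) (u : 𝒵), φ^[n] (e.symm^[n] u) = u := by
    intro n
    induction n with
    | zero => intro u; simp
    | succ n ih =>
      intro u
      rw [Function.iterate_succ_apply' e.symm, Function.iterate_succ_apply φ, heφ, ih]
  have main : ∀ z : 𝒵, (SolSet Φ ∩ Xinf ∩ π ⁻¹' {z}).Nonempty := by
    intro z
    set A : ℕ → Set 𝔛 := fun n => Φ^[n] '' (X0 ∩ π ⁻¹' {e.symm^[n] z}) with hA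
    have hAsub : ∀ n, A (n + 1) ⊆ A n := by
      intro n x hx
      obtain ⟨y, ⟨hy0, hyz⟩, rfl⟩ := hx
      refine ⟨Φ y, ⟨hX0inv ⟨y, hy0, rfl⟩, ?_⟩, (Function.iterate_succ_apply Φ n y).symm⟩
      simp only [mem_preimage, mem_singleton_iff] at hyz ⊢
      rw [hbun, hyz, Function.iterate_succ_apply' e.symm, heφ]
    have hAne : ∀ n, (A n).Nonempty := fun n => ((hX0ne _).image _)
    have hAcpt : ∀ n, IsCompact (A n) := fun n => (hX0cpt _).image (hΦc.iterate n)
    have hAcl : ∀ n, IsClosed (A n) := fun n => (hAcpt n).isClosed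
    obtain ⟨x, hx⟩ := IsCompact.nonempty_iInter_of_sequence_nonempty_isCompact_isClosed
      A hAsub hAne (hAcpt 0) hAcl
    simp only [mem_iInter] at hx
    -- extract data: Θ^[n] x ∈ X0 and Φ^[n] (Θ^[n] x) = x
    have hkey : ∀ n : ℕ, Θ^[n] x ∈ X0 ∧ Φ^[n] (Θ^[n] x) = x := by
      intro n
      obtain ⟨y, ⟨hy0, _⟩, rfl⟩ := hx n
      rw [hΘnΦn]
      exact ⟨hy0, rfl⟩
    have hstep : ∀ n : ℕ, Φ (Θ^[n+1] x) = Θ^[n] x := by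
      intro n
      have h1 := (hkey (n + 1)).2
      rw [Function.iterate_succ_apply Φ] at h1
      calc Φ (Θ^[n+1] x) = Θ^[n] (Φ^[n] (Φ (Θ^[n+1] x))) := (hΘnΦn n _).symm
        _ = Θ^[n] x := by rw [h1]
    have hπx : π x = z := by
      obtain ⟨y, ⟨_, hyz⟩, rfl⟩ := hx 0
      simpa using hyz
    refine ⟨x, ⟨⟨?_, ?_⟩, hπx⟩⟩
    · -- solution through x
      refine ⟨fun t => match t with
        | Int.ofNat n => Φ^[n] x
        | Int.negSucc n => Θ^[n+1] x, by simp, ?_⟩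
      intro t
      match t with
      | Int.ofNat n =>
        show Φ^[n+1] x = Φ (Φ^[n] x)
        exact Function.iterate_succ_apply' Φ n x
      | Int.negSucc 0 =>
        show Φ^[0] x = Φ (Θ^[0+1] x)
        rw [hstep 0]; simp
      | Int.negSucc (n+1) =>
        show Θ^[n+1] x = Φ (Θ^[n+1+1] x)
        rw [hstep (n+1)]
    · rw [hXinf]
      exact mem_iInter.2 fun n => (hkey n).1
  refine ⟨main, fun husp x hx => ?_⟩
  obtain ⟨x', ⟨hx'S, hx'inf⟩, hx'π⟩ := main (π x)
  obtain ⟨y, hy, hy2⟩ := husp (π x)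
  have h1 : x = y := hy2 x ⟨hx, rfl⟩
  have h2 : x' = y := hy2 x' ⟨hx'S, hx'π⟩
  rw [h1, ← h2]
  exact hx'inf
end

section
/- Under the structured setup, suppose 𝔛 is first-countable and let x ∈ 𝔛∞ be such that π(x) is eventually periodic under φ (there exist m ≥ 0 and n ≥ 1 with φ^{m+n}(π(x)) = φ^m(π(x))). Then the omega limit set ω_Φ(x) is contained in S_Φ ∩ 𝔛∞. -/
/-!
For `m > n` the points `w = Φ^[m] x` satisfy `Φ (Θ^[n+1] w) = Θ^[n] w`. This is a closed
condition, so it passes to every ω-limit point `y`, and then the backward orbit `Θ^[n] y`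
continues the forward orbit of `y` to a solution. The forward orbit of `x` stays in `𝔛∞` and,
`π x` being eventually periodic, lies over the finite `φ`-orbit of `π x`; as the fibres of `𝔛∞`
are closed, the orbit lies in a closed subset of `𝔛∞`, which then contains its ω-limit set.
-/

open Set Filter Topology

open Function

section Dynamics

variable {X : Type*}

theorem mem_solSet_of_apply_iterate_succ {Φ Θ : X → X} {y : X}
    (h : ∀ n, Φ (Θ^[n + 1] y) = Θ^[n] y) : y ∈ SolSet Φ := by
  refine ⟨fun t => match t with
    | Int.ofNat n => Φ^[n] y
    | Int.negSucc n => Θ^[n + 1] y, rfl, ?_⟩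
  rintro (n | _ | n)
  · exact iterate_succ_apply' Φ n y
  · exact (h 0).symm
  · exact (h (n + 1)).symm

theorem Function.LeftInverse.iterate_iterate_add_apply {Φ Θ : X → X} (h : LeftInverse Θ Φ)
    (n d : ℕ) (x : X) : Θ^[n] (Φ^[n + d] x) = Φ^[d] x := by
  rw [iterate_add_apply, (h.iterate n).eq]

theorem Function.LeftInverse.apply_iterate_succ_iterate {Φ Θ : X → X} (h : LeftInverse Θ Φ)
    {n m : ℕ} (hnm : n < m) (x : X) : Φ (Θ^[n + 1] (Φ^[m] x)) = Θ^[n] (Φ^[m] x) := by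
  obtain ⟨d, rfl⟩ := Nat.exists_eq_add_of_lt hnm
  rw [show n + d + 1 = n + 1 + d by omega, h.iterate_iterate_add_apply,
    show n + 1 + d = n + (d + 1) by omega, h.iterate_iterate_add_apply, iterate_succ_apply']

theorem finite_range_iterate_of_eventually_periodic {φ : X → X} {z : X} {m n : ℕ}
    (hn : 1 ≤ n) (h : φ^[m + n] z = φ^[m] z) : (range fun k => φ^[k] z).Finite := by
  have hper : IsPeriodicPt φ n (φ^[m] z) := by
    rw [IsPeriodicPt, IsFixedPt, ← iterate_add_apply, add_comm, h]
  refine ((finite_Iio (m + n)).image fun k => φ^[k] z).subset ?_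
  rintro _ ⟨k, rfl⟩
  rcases lt_or_ge k m with hk | hk
  · exact ⟨k, by simp only [mem_Iio]; omega, rfl⟩
  · obtain ⟨j, rfl⟩ := Nat.exists_eq_add_of_le hk
    refine ⟨j % n + m, ?_, ?_⟩
    · have := Nat.mod_lt j (by omega : 0 < n)
      simp only [mem_Iio]; omega
    · simp only [iterate_add_apply, hper.iterate_mod_apply, add_comm m j]

end Dynamics

section Topology

variable {X Z : Type*} [TopologicalSpace X]

theorem biInter_closure_tail_subset {f : ℕ → X} {C : Set X} (hC : IsClosed C) (N : ℕ)
    (hN : ∀ m, N ≤ m → f m ∈ C) :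
    (⋂ n ∈ {n : ℕ | 1 ≤ n}, closure (⋃ m ∈ {m : ℕ | n ≤ m}, {f m})) ⊆ C := by
  refine (biInter_subset_of_mem (le_max_left 1 N)).trans (closure_minimal ?_ hC)
  simp only [iUnion_subset_iff, singleton_subset_iff]
  exact fun m hm => hN m ((le_max_right 1 N).trans hm)

theorem isClosed_inter_preimage_of_finite {A : Set X} {π : X → Z}
    (hA : ∀ z, IsClosed (A ∩ π ⁻¹' {z})) {F : Set Z} (hF : F.Finite) :
    IsClosed (A ∩ π ⁻¹' F) := by
  rw [← biUnion_of_singleton F, preimage_iUnion₂, inter_iUnion₂]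
  exact hF.isClosed_biUnion fun z _ => hA z

end Topology

section Bundle

variable {X Z : Type*} {π : X → Z} {φ : Z → Z} {Θ : X → X}

theorem iterate_apply_iterate_eq_of_apply_apply_eq (h : ∀ w, φ (π (Θ w)) = π w) (n : ℕ)
    (w : X) : φ^[n] (π (Θ^[n] w)) = π w := by
  induction n with
  | zero => rfl
  | succ n ih => rw [iterate_succ_apply, iterate_succ_apply', h, ih]

theorem mapsTo_iInter_preimage_iterate {Φ : X → X} {X₀ : Set X} (hΘΦ : LeftInverse Θ Φ)
    (hX₀ : MapsTo Φ X₀ X₀) : MapsTo Φ (⋂ n, Θ^[n] ⁻¹' X₀) (⋂ n, Θ^[n] ⁻¹' X₀) := by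
  intro w hw
  simp only [mem_iInter, mem_preimage] at hw ⊢
  rintro (_ | n)
  · exact hX₀ (hw 0)
  · rw [iterate_succ_apply, hΘΦ]
    exact hw n

theorem isClosed_iInter_preimage_iterate_inter_fiber [TopologicalSpace X] {X₀ : Set X}
    (hΘ : Continuous Θ) (hφ : Injective φ) (hπΘ : ∀ w, φ (π (Θ w)) = π w)
    (hX₀ : ∀ z, IsClosed (X₀ ∩ π ⁻¹' {z})) (z : Z) :
    IsClosed ((⋂ n, Θ^[n] ⁻¹' X₀) ∩ π ⁻¹' {z}) := by
  -- on the fibre over `z`, each `Θ^[n] w` lies over the unique `φ^[n]`-preimage of `z`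
  have hfiber : (⋂ n, Θ^[n] ⁻¹' X₀) ∩ π ⁻¹' {z} =
      ⋂ n, Θ^[n] ⁻¹' (X₀ ∩ π ⁻¹' (φ^[n] ⁻¹' {z})) := by
    ext w
    simp only [mem_inter_iff, mem_iInter, mem_preimage, mem_singleton_iff,
      iterate_apply_iterate_eq_of_apply_apply_eq hπΘ, forall_and, forall_const]
  rw [hfiber]
  refine isClosed_iInter fun n => (isClosed_inter_preimage_of_finite hX₀ ?_).preimage
    (hΘ.iterate n)
  exact (subsingleton_singleton.preimage (hφ.iterate n)).finite

end Bundle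

theorem stmt14_general {𝔛 𝒵 : Type*} [TopologicalSpace 𝔛]
    [T2Space 𝔛]
    (π : 𝔛 → 𝒵)
    (φ : 𝒵 → 𝒵) (hφb : Function.Bijective φ)
    (Φ : 𝔛 → 𝔛) (hΦc : Continuous Φ) (hbundle : π ∘ Φ = φ ∘ π)
    -- structured setup: a continuous left-inverse Θ of Φ which is a bundle map
    -- over φ⁻¹ (phrased as φ ∘ π ∘ Θ = π), and a forward-invariant set 𝔛₀ with
    -- closed non-empty fibers
    (Θ : 𝔛 → 𝔛) (hΘc : Continuous Θ) (hΘΦ : Θ ∘ Φ = id)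
    (hΘbundle : φ ∘ (π ∘ Θ) = π)
    (X0 : Set 𝔛) (hX0inv : Φ '' X0 ⊆ X0)
    (hX0closed : ∀ z : 𝒵, IsClosed (X0 ∩ π ⁻¹' {z}))
    -- 𝔛∞ := ⋂_{n ≥ 0} (Θⁿ)⁻¹(𝔛₀)
    (Xinf : Set 𝔛) (hXinf : Xinf = ⋂ n : ℕ, Θ^[n] ⁻¹' X0)
    -- x ∈ 𝔛∞ with π(x) eventually periodic under φ
    (x : 𝔛) (hx : x ∈ Xinf)
    (hper : ∃ m n : ℕ, 1 ≤ n ∧ φ^[m + n] (π x) = φ^[m] (π x)) :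
    -- ω_Φ(x) ⊆ S_Φ ∩ 𝔛∞
    (⋂ n ∈ {n : ℕ | 1 ≤ n}, closure (⋃ m ∈ {m : ℕ | n ≤ m}, {Φ^[m] x})) ⊆
      SolSet Φ ∩ Xinf := by
  subst hXinf
  have hΘΦ' : LeftInverse Θ Φ := congrFun hΘΦ
  have hπΘ : ∀ w, φ (π (Θ w)) = π w := congrFun hΘbundle
  refine subset_inter (fun y hy => mem_solSet_of_apply_iterate_succ (Θ := Θ) fun n => ?_) ?_
  · have hclosed := isClosed_eq (hΦc.comp (hΘc.iterate (n + 1))) (hΘc.iterate n)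
    exact biInter_closure_tail_subset hclosed (n + 1)
      (fun m hm => hΘΦ'.apply_iterate_succ_iterate hm x) hy
  · obtain ⟨m, n, hn, hmn⟩ := hper
    have horbit : ∀ k, Φ^[k] x ∈ (⋂ n, Θ^[n] ⁻¹' X0) ∩ π ⁻¹' range fun j => φ^[j] (π x) :=
      fun k => ⟨(mapsTo_iInter_preimage_iterate hΘΦ'
        (mapsTo_iff_image_subset.2 hX0inv)).iterate k hx,
        k, ((show Semiconj π Φ φ from congrFun hbundle).iterate_right k x).symm⟩
    have hclosed := isClosed_inter_preimage_of_finite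
      (isClosed_iInter_preimage_iterate_inter_fiber hΘc hφb.injective hπΘ hX0closed)
      (finite_range_iterate_of_eventually_periodic hn hmn)
    exact (biInter_closure_tail_subset hclosed 0 fun k _ => horbit k).trans inter_subset_left

theorem stmt14 {𝔛 𝒵 : Type*} [TopologicalSpace 𝔛] [TopologicalSpace 𝒵]
    [T2Space 𝔛] [T2Space 𝒵]
    (π : 𝔛 → 𝒵) (hπ : Continuous π)
    (φ : 𝒵 → 𝒵) (hφc : Continuous φ) (hφb : Function.Bijective φ)
    (Φ : 𝔛 → 𝔛) (hΦc : Continuous Φ) (hbundle : π ∘ Φ = φ ∘ π)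
    -- structured setup: a continuous left-inverse Θ of Φ which is a bundle map
    -- over φ⁻¹ (phrased as φ ∘ π ∘ Θ = π), and a forward-invariant set 𝔛₀ with
    -- closed non-empty fibers
    (Θ : 𝔛 → 𝔛) (hΘc : Continuous Θ) (hΘΦ : Θ ∘ Φ = id)
    (hΘbundle : φ ∘ (π ∘ Θ) = π)
    (X0 : Set 𝔛) (hX0inv : Φ '' X0 ⊆ X0)
    (hX0closed : ∀ z : 𝒵, IsClosed (X0 ∩ π ⁻¹' {z}))
    (hX0ne : ∀ z : 𝒵, (X0 ∩ π ⁻¹' {z}).Nonempty)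
    -- 𝔛∞ := ⋂_{n ≥ 0} (Θⁿ)⁻¹(𝔛₀)
    (Xinf : Set 𝔛) (hXinf : Xinf = ⋂ n : ℕ, Θ^[n] ⁻¹' X0)
    -- 𝔛 is first-countable
    [FirstCountableTopology 𝔛]
    -- x ∈ 𝔛∞ with π(x) eventually periodic under φ
    (x : 𝔛) (hx : x ∈ Xinf)
    (hper : ∃ m n : ℕ, 1 ≤ n ∧ φ^[m + n] (π x) = φ^[m] (π x)) :
    -- ω_Φ(x) ⊆ S_Φ ∩ 𝔛∞
    (⋂ n ∈ {n : ℕ | 1 ≤ n}, closure (⋃ m ∈ {m : ℕ | n ≤ m}, {Φ^[m] x})) ⊆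
      SolSet Φ ∩ Xinf :=
  stmt14_general π φ hφb Φ hΦc hbundle Θ hΘc hΘΦ hΘbundle X0 hX0inv hX0closed Xinf hXinf x hx hper
end

section
/- Let 𝔛 be a completely regular Hausdorff space, Φ : 𝔛 → 𝔛 continuous with a continuous left-inverse Θ : 𝔛 → 𝔛, and P_𝔛 a set of Radon probability measures on 𝔛 with (Θ_*)⁻¹(P_𝔛) = P_𝔛 (so that the push-forward Φ_* maps P_𝔛 into P_𝔛). Define S_{Φ_*} := {μ ∈ P_𝔛 : (Φⁿ ∘ Θⁿ)_* μ = μ for all n ≥ 1}. Then μ ∈ P_𝔛 belongs to S_{Φ_*} if and only if supp(μ) ⊆ S_Φ. -/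
open Set Filter Topology MeasureTheory

/-- The support of a measure: the points all of whose open neighborhoods have
strictly positive measure. -/
def measSupp {𝔛 : Type*} [TopologicalSpace 𝔛] [MeasurableSpace 𝔛]
    (μ : Measure 𝔛) : Set 𝔛 :=
  {x | ∀ V : Set 𝔛, IsOpen V → x ∈ V → 0 < μ V}

/-!
Since `Θⁿ ∘ Φⁿ = id`, the continuous map `Fₙ = Φⁿ ∘ Θⁿ` is idempotent, so its fixed point set `Cₙ`
is closed and contains the range of `Fₙ`. If `(Fₙ)_* μ = μ`, then `μ Cₙᶜ = μ (Fₙ⁻¹ Cₙᶜ) = μ ∅ = 0`,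
hence `supp μ ⊆ Cₙ`. Conversely, a compact-inner-regular measure is carried by its support, so
`supp μ ⊆ Cₙ` makes `Fₙ = id` almost everywhere and `(Fₙ)_* μ = μ`. Finally, a point admits a
bi-infinite solution exactly when `Θᵏ x` is a backward orbit of `x`, i.e. when `x ∈ ⋂ₙ Cₙ`.
-/

open Function

theorem measSupp_eq_support {X : Type*} [TopologicalSpace X] [MeasurableSpace X]
    (μ : Measure X) : measSupp μ = μ.support := by
  ext x
  simp only [measSupp, Measure.support_eq_forall_isOpen, mem_ofPred_eq]
  exact forall_congr' fun V => forall_comm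

namespace MeasureTheory.Measure

variable {X : Type*} [TopologicalSpace X] [MeasurableSpace X]

theorem innerRegular_of_eq_iSup_isCompact {μ : Measure X}
    (h : ∀ s : Set X, MeasurableSet s → μ s = ⨆ (K : Set X) (_ : K ⊆ s) (_ : IsCompact K), μ K) :
    μ.InnerRegular := by
  refine ⟨fun s hs r hr => ?_⟩
  rw [h s hs] at hr
  simp only [lt_iSup_iff] at hr
  obtain ⟨K, hKs, hK, hrK⟩ := hr
  exact ⟨K, hKs, hK, hrK⟩

theorem map_eq_self_iff_support_subset_fixedPoints [T2Space X] [BorelSpace X]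
    {μ : Measure X} (hμ : μ.support ∈ ae μ) {F : X → X} (hF : Continuous F)
    (hFF : ∀ x, F (F x) = F x) :
    μ.map F = μ ↔ μ.support ⊆ fixedPoints F := by
  have hC : IsClosed (fixedPoints F) := isClosed_fixedPoints hF
  constructor
  · intro hmap
    refine support_subset_of_isClosed hC ?_
    have hpre : F ⁻¹' (fixedPoints F)ᶜ = ∅ :=
      eq_empty_of_forall_notMem fun x hx => hx (hFF x)
    rw [mem_ae_iff, ← hmap, map_apply hF.measurable hC.isOpen_compl.measurableSet, hpre,
      measure_empty]
  · intro hsupp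
    have hae : F =ᵐ[μ] id := mem_of_superset hμ hsupp
    rw [map_congr hae, map_id]

end MeasureTheory.Measure

section Solutions

variable {X : Type*} {Φ Θ : X → X}

theorem mem_solSet_iff_exists_backward_orbit {x : X} :
    x ∈ SolSet Φ ↔ ∃ ψ : ℕ → X, ψ 0 = x ∧ ∀ k, Φ (ψ (k + 1)) = ψ k := by
  constructor
  · rintro ⟨χ, rfl, hχ⟩
    refine ⟨fun k => χ (-k), by simp, fun k => ?_⟩
    rw [← hχ]
    congr 1
    push_cast
    ring
  · rintro ⟨ψ, rfl, hψ⟩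
    -- `χ t = Φᵗ x` for `t ≥ 0` and `χ t = ψ (-t)` for `t < 0`
    refine ⟨fun t => Φ^[t.toNat] (ψ (-t).toNat), by simp, fun t => ?_⟩
    dsimp only
    rcases le_or_gt 0 t with ht | ht
    · rw [show (t + 1).toNat = t.toNat + 1 by omega, show (-(t + 1)).toNat = (-t).toNat by omega,
        iterate_succ_apply']
    · rw [show (t + 1).toNat = t.toNat by omega, show t.toNat = 0 by omega,
        show (-t).toNat = (-(t + 1)).toNat + 1 by omega, iterate_zero_apply, iterate_zero_apply,
        hψ]

theorem iterate_apply_backward_orbit {ψ : ℕ → X} (hψ : ∀ k, Φ (ψ (k + 1)) = ψ k) (n : ℕ) :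
    Φ^[n] (ψ n) = ψ 0 := by
  induction n with
  | zero => rfl
  | succ n ih => rw [iterate_succ_apply, hψ, ih]

theorem Function.LeftInverse.mem_solSet_iff (h : LeftInverse Θ Φ) {x : X} :
    x ∈ SolSet Φ ↔ ∀ n, Φ^[n] (Θ^[n] x) = x := by
  rw [mem_solSet_iff_exists_backward_orbit]
  constructor
  · rintro ⟨ψ, rfl, hψ⟩ n
    rw [← iterate_apply_backward_orbit hψ n, (h.iterate n) (ψ n)]
  · intro hx
    refine ⟨fun k => Θ^[k] x, rfl, fun k => ?_⟩
    calc Φ (Θ^[k + 1] x) = Θ^[k] (Φ^[k] (Φ (Θ^[k + 1] x))) := (h.iterate k _).symm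
      _ = Θ^[k] x := by rw [← iterate_succ_apply Φ k, hx]

theorem Function.LeftInverse.iterate_comp_iterate_idempotent (h : LeftInverse Θ Φ) (n : ℕ)
    (x : X) : (Φ^[n] ∘ Θ^[n]) ((Φ^[n] ∘ Θ^[n]) x) = (Φ^[n] ∘ Θ^[n]) x := by
  simp only [comp_apply, h.iterate n _]

end Solutions

theorem stmt15_general {𝔛 : Type*} [TopologicalSpace 𝔛] [T2Space 𝔛]
    [MeasurableSpace 𝔛] [BorelSpace 𝔛]
    (Φ : 𝔛 → 𝔛) (hΦc : Continuous Φ)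
    -- a continuous left-inverse Θ of Φ
    (Θ : 𝔛 → 𝔛) (hΘc : Continuous Θ) (hΘΦ : Θ ∘ Φ = id)
    -- P_𝔛 : a set of Radon probability measures on 𝔛 with (Θ_*)⁻¹(P_𝔛) = P_𝔛
    (PX : Set (Measure 𝔛))
    (hPXradon : ∀ μ ∈ PX, ∀ s : Set 𝔛, MeasurableSet s →
      μ s = ⨆ (K : Set 𝔛) (_ : K ⊆ s) (_ : IsCompact K), μ K)
    (μ : Measure 𝔛) (hμ : μ ∈ PX) :
    -- μ ∈ S_{Φ_*} iff supp(μ) ⊆ S_Φ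
    (∀ n : ℕ, 1 ≤ n → Measure.map (Φ^[n] ∘ Θ^[n]) μ = μ) ↔ measSupp μ ⊆ SolSet Φ := by
  have hLI : LeftInverse Θ Φ := congrFun hΘΦ
  have := Measure.innerRegular_of_eq_iSup_isCompact (hPXradon μ hμ)
  have hinv (n : ℕ) : μ.map (Φ^[n] ∘ Θ^[n]) = μ ↔ μ.support ⊆ fixedPoints (Φ^[n] ∘ Θ^[n]) :=
    Measure.map_eq_self_iff_support_subset_fixedPoints Measure.support_mem_ae_of_innerRegular
      ((hΦc.iterate n).comp (hΘc.iterate n)) (hLI.iterate_comp_iterate_idempotent n)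
  calc (∀ n, 1 ≤ n → μ.map (Φ^[n] ∘ Θ^[n]) = μ)
      ↔ ∀ n, 1 ≤ n → μ.support ⊆ fixedPoints (Φ^[n] ∘ Θ^[n]) := by simp only [hinv]
    _ ↔ ∀ n, μ.support ⊆ fixedPoints (Φ^[n] ∘ Θ^[n]) :=
      ⟨fun h n => n.eq_zero_or_pos.elim (fun hn => by simp [hn]) (h n), fun h n _ => h n⟩
    _ ↔ measSupp μ ⊆ SolSet Φ := by
      simp only [measSupp_eq_support, subset_def, hLI.mem_solSet_iff, mem_fixedPoints, IsFixedPt,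
        comp_apply]
      exact forall_comm.trans (forall_congr' fun _ => forall_comm)

theorem stmt15 {𝔛 : Type*} [TopologicalSpace 𝔛] [T2Space 𝔛] [CompletelyRegularSpace 𝔛]
    [MeasurableSpace 𝔛] [BorelSpace 𝔛]
    (Φ : 𝔛 → 𝔛) (hΦc : Continuous Φ)
    -- a continuous left-inverse Θ of Φ
    (Θ : 𝔛 → 𝔛) (hΘc : Continuous Θ) (hΘΦ : Θ ∘ Φ = id)
    -- P_𝔛 : a set of Radon probability measures on 𝔛 with (Θ_*)⁻¹(P_𝔛) = P_𝔛
    (PX : Set (Measure 𝔛))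
    (hPXprob : ∀ μ ∈ PX, IsProbabilityMeasure μ)
    (hPXradon : ∀ μ ∈ PX, ∀ s : Set 𝔛, MeasurableSet s →
      μ s = ⨆ (K : Set 𝔛) (_ : K ⊆ s) (_ : IsCompact K), μ K)
    (hPXinv : (fun μ : Measure 𝔛 => Measure.map Θ μ) ⁻¹' PX = PX)
    (μ : Measure 𝔛) (hμ : μ ∈ PX) :
    -- μ ∈ S_{Φ_*} iff supp(μ) ⊆ S_Φ
    (∀ n : ℕ, 1 ≤ n → Measure.map (Φ^[n] ∘ Θ^[n]) μ = μ) ↔ measSupp μ ⊆ SolSet Φ :=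
  stmt15_general Φ hΦc Θ hΘc hΘΦ PX hPXradon μ hμ
end

section
/- Suppose in addition that Φ has the unique solution property (USP) and that the map s : 𝒵 → 𝔛 assigning to each z the unique point of S_Φ ∩ π⁻¹(z) is continuous, and let P_𝒵 be a set of Radon probability measures on 𝒵 with π_*(P_𝔛) ⊆ P_𝒵. Then s_*(P_𝒵) ∩ P_𝔛 = S_{Φ_*}. In particular, if s_*(P_𝒵) ⊆ P_𝔛, then for every Ξ ∈ P_𝒵 there is exactly one μ ∈ S_{Φ_*} with π_* μ = Ξ. -/
open Set Filter Topology MeasureTheory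

-- points of SolSet are fixed by Φ^[n]∘Θ^[n]
lemma solset_fixed {𝔛 : Type*} {Φ Θ : 𝔛 → 𝔛} (hΘΦ : Θ ∘ Φ = id)
    {x : 𝔛} (hx : x ∈ SolSet Φ) (n : ℕ) : Φ^[n] (Θ^[n] x) = x := by
  obtain ⟨χ, h0, hstep⟩ := hx
  have hL : Function.LeftInverse Θ Φ := fun y => congrFun hΘΦ y
  have hfor : ∀ (m : ℕ) (t : ℤ), Φ^[m] (χ t) = χ (t + m) := by
    intro m
    induction m with
    | zero => intro t; simp
    | succ m ih =>
      intro t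
      rw [Function.iterate_succ_apply', ih t, ← hstep (t + m)]
      push_cast
      ring_nf
  have h1 : Φ^[n] (χ (-(n : ℤ))) = x := by rw [hfor n (-(n : ℤ))]; simp [h0]
  have h2 : Θ^[n] x = χ (-(n : ℤ)) := by
    rw [← h1, (hL.iterate n) (χ (-(n : ℤ)))]
  rw [h2, h1]

-- conversely, a point fixed by all Φ^[n]∘Θ^[n] (n ≥ 1) lies in SolSet
lemma mem_solset {𝔛 : Type*} {Φ Θ : 𝔛 → 𝔛} (hΘΦ : Θ ∘ Φ = id)
    {x : 𝔛} (hx : ∀ n : ℕ, 1 ≤ n → Φ^[n] (Θ^[n] x) = x) : x ∈ SolSet Φ := by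
  have hL : Function.LeftInverse Θ Φ := fun y => congrFun hΘΦ y
  have hA : ∀ k : ℕ, Θ^[k] x = Φ (Θ^[k + 1] x) := by
    intro k
    calc Θ^[k] x = Θ^[k] (Φ^[k + 1] (Θ^[k + 1] x)) := by rw [hx (k + 1) (by omega)]
    _ = Θ^[k] (Φ^[k] (Φ (Θ^[k + 1] x))) := by rw [Function.iterate_succ_apply]
    _ = Φ (Θ^[k + 1] x) := (hL.iterate k) _
  refine ⟨fun t => if 0 ≤ t then Φ^[t.toNat] x else Θ^[(-t).toNat] x, by simp, ?_⟩
  have hneg : ∀ k : ℕ,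
      (if 0 ≤ (-(k : ℤ)) then Φ^[(-(k : ℤ)).toNat] x else Θ^[(-(-(k : ℤ))).toNat] x)
        = Θ^[k] x := by
    intro k
    rcases Nat.eq_zero_or_pos k with hk | hk
    · subst hk; simp
    · have h1 : ¬ (0 ≤ (-(k : ℤ))) := by omega
      rw [if_neg h1]
      norm_num
  intro t
  dsimp only
  rcases le_or_gt 0 t with ht | ht
  · have h1 : 0 ≤ t + 1 := by omega
    have h2 : (t + 1).toNat = t.toNat + 1 := by omega
    rw [if_pos ht, if_pos h1, h2, Function.iterate_succ_apply']
  · obtain ⟨k, rfl⟩ : ∃ k : ℕ, t = -((k : ℤ) + 1) := ⟨(-t).toNat - 1, by omega⟩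
    have e1 : -((k : ℤ) + 1) + 1 = -(k : ℤ) := by ring
    have e2 : -((k : ℤ) + 1) = -((k + 1 : ℕ) : ℤ) := by push_cast; ring
    rw [e1, hneg k, e2, hneg (k + 1), hA k]

theorem stmt16 {𝔛 𝒵 : Type*}
    [TopologicalSpace 𝔛] [T2Space 𝔛] [CompletelyRegularSpace 𝔛]
    [MeasurableSpace 𝔛] [BorelSpace 𝔛]
    [TopologicalSpace 𝒵] [T2Space 𝒵] [CompletelyRegularSpace 𝒵]
    [MeasurableSpace 𝒵] [BorelSpace 𝒵]
    (π : 𝔛 → 𝒵) (hπ : Continuous π)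
    (φ : 𝒵 → 𝒵) (hφc : Continuous φ) (hφb : Function.Bijective φ)
    (Φ : 𝔛 → 𝔛) (hΦc : Continuous Φ) (hbundle : π ∘ Φ = φ ∘ π)
    -- a continuous left-inverse Θ of Φ
    (Θ : 𝔛 → 𝔛) (hΘc : Continuous Θ) (hΘΦ : Θ ∘ Φ = id)
    -- P_𝔛 : a set of Radon probability measures on 𝔛 with (Θ_*)⁻¹(P_𝔛) = P_𝔛
    (PX : Set (Measure 𝔛))
    (hPXprob : ∀ μ ∈ PX, IsProbabilityMeasure μ)
    (hPXradon : ∀ μ ∈ PX, ∀ s : Set 𝔛, MeasurableSet s →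
      μ s = ⨆ (K : Set 𝔛) (_ : K ⊆ s) (_ : IsCompact K), μ K)
    (hPXinv : (fun μ : Measure 𝔛 => Measure.map Θ μ) ⁻¹' PX = PX)
    -- P_𝒵 : a set of Radon probability measures on 𝒵 with π_*(P_𝔛) ⊆ P_𝒵
    (PZ : Set (Measure 𝒵))
    (hPZprob : ∀ Ξ ∈ PZ, IsProbabilityMeasure Ξ)
    (hPZradon : ∀ Ξ ∈ PZ, ∀ s : Set 𝒵, MeasurableSet s →
      Ξ s = ⨆ (K : Set 𝒵) (_ : K ⊆ s) (_ : IsCompact K), Ξ K)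
    (hπPX : (fun μ : Measure 𝔛 => Measure.map π μ) '' PX ⊆ PZ)
    -- unique solution property, and the continuous selection s
    (hUSP : ∀ z : 𝒵, ∃! x : 𝔛, x ∈ SolSet Φ ∧ π x = z)
    (s : 𝒵 → 𝔛) (hs : ∀ z : 𝒵, s z ∈ SolSet Φ ∧ π (s z) = z) (hsc : Continuous s) :
    -- s_*(P_𝒵) ∩ P_𝔛 = S_{Φ_*}
    ((fun Ξ : Measure 𝒵 => Measure.map s Ξ) '' PZ ∩ PX =
      {μ ∈ PX | ∀ n : ℕ, 1 ≤ n → Measure.map (Φ^[n] ∘ Θ^[n]) μ = μ}) ∧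
    -- in particular, if s_*(P_𝒵) ⊆ P_𝔛, then for every Ξ ∈ P_𝒵 there is exactly one
    -- μ ∈ S_{Φ_*} with π_* μ = Ξ
    ((fun Ξ : Measure 𝒵 => Measure.map s Ξ) '' PZ ⊆ PX →
      ∀ Ξ ∈ PZ, ∃! μ : Measure 𝔛,
        μ ∈ {μ ∈ PX | ∀ n : ℕ, 1 ≤ n → Measure.map (Φ^[n] ∘ Θ^[n]) μ = μ} ∧
        Measure.map π μ = Ξ) := by
  classical
  have hL : Function.LeftInverse Θ Φ := fun y => congrFun hΘΦ y
  have hmΦ : Measurable Φ := hΦc.measurable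
  have hmΘ : Measurable Θ := hΘc.measurable
  have hmπ : Measurable π := hπ.measurable
  have hms : Measurable s := hsc.measurable
  have hmf : ∀ n : ℕ, Measurable (Φ^[n] ∘ Θ^[n]) :=
    fun n => (hmΦ.iterate n).comp (hmΘ.iterate n)
  -- forward: push-forwards of measures on 𝒵 under s are invariant
  have hfwd : ∀ (Ξ : Measure 𝒵) (n : ℕ),
      Measure.map (Φ^[n] ∘ Θ^[n]) (Measure.map s Ξ) = Measure.map s Ξ := by
    intro Ξ n
    rw [Measure.map_map (hmf n) hms]
    have : (Φ^[n] ∘ Θ^[n]) ∘ s = s := by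
      funext z
      exact solset_fixed hΘΦ (hs z).1 n
    rw [this]
  -- key: invariant probability measures μ satisfy s_*(π_* μ) = μ
  have hkey : ∀ μ : Measure 𝔛, IsProbabilityMeasure μ →
      (∀ n : ℕ, 1 ≤ n → Measure.map (Φ^[n] ∘ Θ^[n]) μ = μ) →
      Measure.map s (Measure.map π μ) = μ := by
    intro μ hprob hinv
    have hR : ∀ n : ℕ, MeasurableSet {x : 𝔛 | Φ^[n] (Θ^[n] x) = x} :=
      fun n => (isClosed_eq ((hΦc.iterate n).comp (hΘc.iterate n)) continuous_id).measurableSet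
    have hfull : ∀ n : ℕ, 1 ≤ n → μ {x : 𝔛 | Φ^[n] (Θ^[n] x) = x}ᶜ = 0 := by
      intro n hn
      have h1 : μ {x : 𝔛 | Φ^[n] (Θ^[n] x) = x} = 1 := by
        conv_lhs => rw [← hinv n hn]
        rw [Measure.map_apply (hmf n) (hR n)]
        have : (Φ^[n] ∘ Θ^[n]) ⁻¹' {x : 𝔛 | Φ^[n] (Θ^[n] x) = x} = Set.univ := by
          ext x
          simp only [Set.mem_preimage, Set.mem_setOf_eq, Set.mem_univ, iff_true,
            Function.comp_apply]
          rw [(hL.iterate n) (Θ^[n] x)]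
        rw [this, measure_univ]
      rw [prob_compl_eq_zero_iff (hR n)]
      exact h1
    have hae : ∀ᵐ x ∂μ, ∀ n : ℕ, 1 ≤ n → Φ^[n] (Θ^[n] x) = x := by
      rw [ae_all_iff]
      intro n
      rcases Nat.eq_zero_or_pos n with hn | hn
      · subst hn
        filter_upwards with x h
        omega
      · have := hfull n hn
        filter_upwards [measure_eq_zero_iff_ae_notMem.mp this] with x hx _
        simpa using hx
    have haeeq : s ∘ π =ᵐ[μ] id := by
      filter_upwards [hae] with x hx
      have hxs : x ∈ SolSet Φ := mem_solset hΘΦ hx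
      exact (hUSP (π x)).unique ⟨(hs (π x)).1, (hs (π x)).2⟩ ⟨hxs, rfl⟩
    rw [Measure.map_map hms hmπ, Measure.map_congr haeeq, Measure.map_id]
  have hset : (fun Ξ : Measure 𝒵 => Measure.map s Ξ) '' PZ ∩ PX =
      {μ ∈ PX | ∀ n : ℕ, 1 ≤ n → Measure.map (Φ^[n] ∘ Θ^[n]) μ = μ} := by
    ext μ
    constructor
    · rintro ⟨⟨Ξ, hΞ, rfl⟩, hμPX⟩
      exact ⟨hμPX, fun n _ => hfwd Ξ n⟩
    · rintro ⟨hμPX, hinv⟩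
      refine ⟨⟨Measure.map π μ, hπPX ⟨μ, hμPX, rfl⟩, hkey μ (hPXprob μ hμPX) hinv⟩, hμPX⟩
  refine ⟨hset, ?_⟩
  intro himg Ξ hΞ
  have hπs : π ∘ s = id := funext fun z => (hs z).2
  refine ⟨Measure.map s Ξ, ⟨⟨himg ⟨Ξ, hΞ, rfl⟩, fun n _ => hfwd Ξ n⟩, ?_⟩, ?_⟩
  · rw [Measure.map_map hmπ hms, hπs, Measure.map_id]
  · rintro μ' ⟨⟨hμ'PX, hinv⟩, hπμ'⟩
    rw [← hkey μ' (hPXprob μ' hμ'PX) hinv, hπμ']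
end

section
/- Let (Ω, 𝒜, P) be a probability space, and for i = 1, 2, 3 let Σ_i ⊆ 𝒜 be the σ-algebra generated by a measurable map V_i : Ω → 𝒱_i into a measurable space 𝒱_i. Let Λ be the Lebesgue measure on [0,1], and suppose g : 𝒱₂ × [0,1] → 𝒱₃ is a measurable map satisfying (π_{𝒱₂} × g)_*((V₂)_*P ⊗ Λ) = (V₂ × V₃)_*P. Let G : 𝒱₁ × 𝒱₂ × [0,1] → 𝒱₁ × 𝒱₂ × 𝒱₃ denote the map G(v₁, v₂, λ) = (v₁, v₂, g(v₂, λ)). Then the following are equivalent: (i) Σ₁ and Σ₃ are conditionally independent given Σ₂ with respect to P; (ii) G_*((V₁ × V₂)_*P ⊗ Λ) = (V₁ × V₂ × V₃)_*P. -/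
/-!
Write `k f (v₂) = ∫ f (g (v₂, λ)) dΛ(λ)`. The hypothesis on `g` says, by Fubini, that
`E[f(V₃) | Σ₂] = k f (V₂)`. Both (i) and (ii) are then equivalent to
`E[f₁(V₁) f₃(V₃); V₂ ∈ B] = E[f₁(V₁) · k f₃ (V₂); V₂ ∈ B]` for all bounded measurable `f₁`, `f₃`
and measurable `B`: for (i) by factoring `Σᵢ`-measurable functions through `Vᵢ`, the pull-out
property and uniqueness of conditional expectations; for (ii) by Fubini on the left-hand measure
and testing both measures on boxes `A × B × C`.
-/

open Set Filter Topology MeasureTheory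

/-- `Σ₁` and `Σ₃` are conditionally independent given `Σ₂` with respect to `μ`:
`E[β₁β₃ | Σ₂] = E[β₁ | Σ₂]·E[β₃ | Σ₂]` a.s. for all bounded `Σ₁`- resp.
`Σ₃`-measurable real functions `β₁`, `β₃`. -/
def CondIndepGiven {Ω : Type*} [MeasurableSpace Ω] (μ : Measure Ω)
    (m₁ m₂ m₃ : MeasurableSpace Ω) : Prop :=
  ∀ β₁ β₃ : Ω → ℝ, Measurable[m₁] β₁ → Measurable[m₃] β₃ →
    (∃ C : ℝ, ∀ ω, |β₁ ω| ≤ C) → (∃ C : ℝ, ∀ ω, |β₃ ω| ≤ C) →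
    (μ[fun ω => β₁ ω * β₃ ω|m₂]) =ᵐ[μ] fun ω => (μ[β₁|m₂]) ω * (μ[β₃|m₂]) ω

structure BddMeasurable {α : Type*} [MeasurableSpace α] (f : α → ℝ) : Prop where
  measurable : Measurable f
  exists_bound : ∃ C, ∀ x, |f x| ≤ C

namespace BddMeasurable

variable {α β : Type*} [MeasurableSpace α] [MeasurableSpace β] {f f' : α → ℝ}

theorem mul (hf : BddMeasurable f) (hf' : BddMeasurable f') :
    BddMeasurable fun x => f x * f' x := by
  obtain ⟨C, hC⟩ := hf.exists_bound
  obtain ⟨C', hC'⟩ := hf'.exists_bound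
  refine ⟨hf.measurable.mul hf'.measurable, C * C', fun x => ?_⟩
  rw [abs_mul]
  exact mul_le_mul (hC x) (hC' x) (abs_nonneg _) ((abs_nonneg _).trans (hC x))

theorem comp {h : β → ℝ} (hh : BddMeasurable h) {V : α → β} (hV : Measurable V) :
    BddMeasurable fun x => h (V x) :=
  ⟨hh.measurable.comp hV, hh.exists_bound.imp fun _ hC x => hC (V x)⟩

theorem integrable (hf : BddMeasurable f) (μ : Measure α) [IsFiniteMeasure μ] :
    Integrable f μ := by
  obtain ⟨C, hC⟩ := hf.exists_bound
  exact .of_bound hf.measurable.aestronglyMeasurable C (.of_forall hC)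

end BddMeasurable

theorem bddMeasurable_indicator_one {α : Type*} [MeasurableSpace α] {s : Set α}
    (hs : MeasurableSet s) : BddMeasurable (s.indicator (1 : α → ℝ)) :=
  ⟨measurable_one.indicator hs, 1, fun x => by by_cases hx : x ∈ s <;> simp [hx]⟩

theorem exists_bddMeasurable_comp_eq {Ω 𝒱 : Type*} [MeasurableSpace 𝒱] {V : Ω → 𝒱}
    {β : Ω → ℝ} (hβ : Measurable[MeasurableSpace.comap V inferInstance] β) {C : ℝ}
    (hC : ∀ ω, |β ω| ≤ C) :
    ∃ f : 𝒱 → ℝ, BddMeasurable f ∧ β = fun ω => f (V ω) := by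
  obtain ⟨h, hh, rfl⟩ := hβ.exists_eq_measurable_comp
  -- clamping `h` to `[-C, C]` does not change it on the range of `V`
  refine ⟨fun v => max (-C) (min C (h v)),
    ⟨measurable_const.max (measurable_const.min hh), |C|, fun v => ?_⟩, funext fun ω => ?_⟩
  · rw [abs_le]
    constructor
    · exact (neg_le_neg (le_abs_self C)).trans (le_max_left _ _)
    · exact max_le (neg_le_abs C) ((min_le_left _ _).trans (le_abs_self C))
  · obtain ⟨hlo, hhi⟩ := abs_le.mp (hC ω)
    exact (max_eq_right hlo).symm.trans (congrArg _ (min_eq_right hhi).symm)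

theorem condIndepGiven_comap_iff {Ω 𝒱₁ 𝒱₂ 𝒱₃ : Type*} [MeasurableSpace Ω] [MeasurableSpace 𝒱₁]
    [MeasurableSpace 𝒱₂] [MeasurableSpace 𝒱₃] (μ : Measure Ω) (V₁ : Ω → 𝒱₁) (V₂ : Ω → 𝒱₂)
    (V₃ : Ω → 𝒱₃) :
    CondIndepGiven μ (MeasurableSpace.comap V₁ inferInstance)
        (MeasurableSpace.comap V₂ inferInstance) (MeasurableSpace.comap V₃ inferInstance) ↔
      ∀ f₁ f₃, BddMeasurable f₁ → BddMeasurable f₃ →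
        μ[fun ω => f₁ (V₁ ω) * f₃ (V₃ ω) | MeasurableSpace.comap V₂ inferInstance] =ᵐ[μ]
          fun ω => (μ[fun ω => f₁ (V₁ ω) | MeasurableSpace.comap V₂ inferInstance]) ω *
            (μ[fun ω => f₃ (V₃ ω) | MeasurableSpace.comap V₂ inferInstance]) ω := by
  constructor
  · intro h f₁ f₃ hf₁ hf₃
    exact h _ _ (hf₁.measurable.comp (comap_measurable V₁))
      (hf₃.measurable.comp (comap_measurable V₃))
      (hf₁.exists_bound.imp fun _ hC ω => hC _) (hf₃.exists_bound.imp fun _ hC ω => hC _)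
  · rintro h β₁ β₃ hβ₁ hβ₃ ⟨C₁, hC₁⟩ ⟨C₃, hC₃⟩
    obtain ⟨f₁, hf₁, rfl⟩ := exists_bddMeasurable_comp_eq hβ₁ hC₁
    obtain ⟨f₃, hf₃, rfl⟩ := exists_bddMeasurable_comp_eq hβ₃ hC₃
    exact h f₁ f₃ hf₁ hf₃

theorem condExp_mul_ae_eq_iff_setIntegral_eq {Ω : Type*} {m m₀ : MeasurableSpace Ω}
    {μ : Measure Ω} (hm : m ≤ m₀) [SigmaFinite (μ.trim hm)] {X Y ψ : Ω → ℝ}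
    (hψ : StronglyMeasurable[m] ψ) (hY : μ[Y | m] =ᵐ[μ] ψ) (hX : Integrable X μ)
    (hXY : Integrable (fun ω => X ω * Y ω) μ) (hXψ : Integrable (fun ω => X ω * ψ ω) μ) :
    μ[fun ω => X ω * Y ω | m] =ᵐ[μ] (fun ω => (μ[X | m]) ω * (μ[Y | m]) ω) ↔
      ∀ s, MeasurableSet[m] s → ∫ ω in s, X ω * Y ω ∂μ = ∫ ω in s, X ω * ψ ω ∂μ := by
  have hpull : μ[fun ω => X ω * ψ ω | m] =ᵐ[μ] fun ω => (μ[X | m]) ω * (μ[Y | m]) ω :=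
    (condExp_mul_of_stronglyMeasurable_right hψ hXψ hX).trans (hY.mono fun ω h => by simp [h])
  constructor
  · intro h s hs
    rw [← setIntegral_condExp hm hXY hs, ← setIntegral_condExp hm hXψ hs]
    exact setIntegral_congr_ae (hm s hs) ((h.trans hpull.symm).mono fun _ h _ => h)
  · intro h
    refine (ae_eq_condExp_of_forall_setIntegral_eq hm hXY
      (fun s _ _ => integrable_condExp.integrableOn) (fun s hs _ => ?_)
      stronglyMeasurable_condExp.aestronglyMeasurable).symm.trans hpull
    rw [setIntegral_condExp hm hXψ hs, h s hs]

theorem setIntegral_preimage_eq_integral_indicator_mul {Ω 𝒱 : Type*} [MeasurableSpace Ω]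
    [MeasurableSpace 𝒱] {μ : Measure Ω} {V : Ω → 𝒱} (hV : Measurable V) {B : Set 𝒱}
    (hB : MeasurableSet B) (F : Ω → ℝ) :
    ∫ ω in V ⁻¹' B, F ω ∂μ = ∫ ω, B.indicator 1 (V ω) * F ω ∂μ := by
  rw [← integral_indicator (hV hB)]
  congr 1 with ω
  by_cases h : V ω ∈ B <;> simp [h]

theorem indicator_prod_prod_one {α β γ : Type*} (A : Set α) (B : Set β) (C : Set γ)
    (v : α × β × γ) :
    (A ×ˢ B ×ˢ C).indicator (1 : α × β × γ → ℝ) v =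
      B.indicator 1 v.2.1 * (A.indicator 1 v.1 * C.indicator 1 v.2.2) := by
  rw [← Prod.mk.eta (p := v), indicator_prod_one, ← Prod.mk.eta (p := v.2), indicator_prod_one]
  ring

theorem integral_indicator_mul_map_eq_setIntegral {Ω 𝒱₁ 𝒱₂ 𝒱₃ : Type*} [MeasurableSpace Ω]
    [MeasurableSpace 𝒱₁] [MeasurableSpace 𝒱₂] [MeasurableSpace 𝒱₃] {P : Measure Ω}
    {V₁ : Ω → 𝒱₁} {V₂ : Ω → 𝒱₂} {V₃ : Ω → 𝒱₃}
    (hV₁ : Measurable V₁) (hV₂ : Measurable V₂) (hV₃ : Measurable V₃)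
    {f₁ : 𝒱₁ → ℝ} {f₃ : 𝒱₃ → ℝ} (hf₁ : Measurable f₁) (hf₃ : Measurable f₃)
    {B : Set 𝒱₂} (hB : MeasurableSet B) :
    ∫ v, B.indicator 1 v.2.1 * (f₁ v.1 * f₃ v.2.2)
        ∂(Measure.map (fun ω => (V₁ ω, V₂ ω, V₃ ω)) P) =
      ∫ ω in V₂ ⁻¹' B, f₁ (V₁ ω) * f₃ (V₃ ω) ∂P := by
  have hF : Measurable fun v : 𝒱₁ × 𝒱₂ × 𝒱₃ => B.indicator 1 v.2.1 * (f₁ v.1 * f₃ v.2.2) :=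
    ((measurable_one.indicator hB).comp measurable_snd.fst).mul
      ((hf₁.comp measurable_fst).mul (hf₃.comp measurable_snd.snd))
  rw [integral_map (hV₁.prodMk (hV₂.prodMk hV₃)).aemeasurable hF.aestronglyMeasurable,
    setIntegral_preimage_eq_integral_indicator_mul hV₂ hB]

noncomputable def noiseAverage {𝒱₂ 𝒱₃ I : Type*} [MeasurableSpace I] (Λ : Measure I)
    (g : 𝒱₂ × I → 𝒱₃) (f : 𝒱₃ → ℝ) (v : 𝒱₂) : ℝ :=
  ∫ l, f (g (v, l)) ∂Λ

section NoiseAverage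

variable {Ω 𝒱₁ 𝒱₂ 𝒱₃ I : Type*} [MeasurableSpace Ω] [MeasurableSpace 𝒱₁] [MeasurableSpace 𝒱₂]
  [MeasurableSpace 𝒱₃] [MeasurableSpace I] {Λ : Measure I} [IsFiniteMeasure Λ]
  {g : 𝒱₂ × I → 𝒱₃}

theorem BddMeasurable.noiseAverage (hg : Measurable g) {f : 𝒱₃ → ℝ} (hf : BddMeasurable f) :
    BddMeasurable (noiseAverage Λ g f) := by
  obtain ⟨C, hC⟩ := hf.exists_bound
  refine ⟨(hf.measurable.comp hg).stronglyMeasurable.integral_prod_right'.measurable,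
    C * Λ.real univ, fun v => ?_⟩
  exact (Real.norm_eq_abs _).symm.le.trans
    (norm_integral_le_of_norm_le_const (.of_forall fun l => (Real.norm_eq_abs _).le.trans (hC _)))

theorem integral_prod_mul_eq_integral_mul_noiseAverage {W : Type*} [MeasurableSpace W]
    {μ : Measure W} [IsFiniteMeasure μ] (hg : Measurable g) {π : W → 𝒱₂} (hπ : Measurable π)
    {φ : W → ℝ} (hφ : BddMeasurable φ) {f : 𝒱₃ → ℝ} (hf : BddMeasurable f) :
    ∫ p, φ p.1 * f (g (π p.1, p.2)) ∂(μ.prod Λ) = ∫ w, φ w * noiseAverage Λ g f (π w) ∂μ := by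
  have hint : Integrable (fun p : W × I => φ p.1 * f (g (π p.1, p.2))) (μ.prod Λ) :=
    ((hφ.comp measurable_fst).mul
      (hf.comp (hg.comp ((hπ.comp measurable_fst).prodMk measurable_snd)))).integrable _
  rw [integral_prod _ hint]
  simp_rw [integral_const_mul]
  rfl

variable {P : Measure Ω} [IsFiniteMeasure P] {V₁ : Ω → 𝒱₁} {V₂ : Ω → 𝒱₂} {V₃ : Ω → 𝒱₃}

theorem integral_comp_mul_comp_eq_integral_mul_noiseAverage (hV₂ : Measurable V₂)
    (hV₃ : Measurable V₃) (hg : Measurable g)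
    (hgrep : Measure.map (fun p => (p.1, g p)) ((Measure.map V₂ P).prod Λ) =
      Measure.map (fun ω => (V₂ ω, V₃ ω)) P)
    {f₂ : 𝒱₂ → ℝ} {f₃ : 𝒱₃ → ℝ} (hf₂ : BddMeasurable f₂) (hf₃ : BddMeasurable f₃) :
    ∫ ω, f₂ (V₂ ω) * f₃ (V₃ ω) ∂P = ∫ ω, f₂ (V₂ ω) * noiseAverage Λ g f₃ (V₂ ω) ∂P := by
  have hF : Measurable fun v : 𝒱₂ × 𝒱₃ => f₂ v.1 * f₃ v.2 :=
    ((hf₂.comp measurable_fst).mul (hf₃.comp measurable_snd)).measurable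
  calc ∫ ω, f₂ (V₂ ω) * f₃ (V₃ ω) ∂P
      = ∫ v, f₂ v.1 * f₃ v.2 ∂(Measure.map (fun ω => (V₂ ω, V₃ ω)) P) :=
        (integral_map (hV₂.prodMk hV₃).aemeasurable hF.aestronglyMeasurable).symm
    _ = ∫ p, f₂ p.1 * f₃ (g (id p.1, p.2)) ∂((Measure.map V₂ P).prod Λ) := by
        rw [← hgrep, integral_map (measurable_fst.prodMk hg).aemeasurable hF.aestronglyMeasurable]
        rfl
    _ = ∫ v, f₂ v * noiseAverage Λ g f₃ v ∂(Measure.map V₂ P) :=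
        integral_prod_mul_eq_integral_mul_noiseAverage hg measurable_id hf₂ hf₃
    _ = ∫ ω, f₂ (V₂ ω) * noiseAverage Λ g f₃ (V₂ ω) ∂P :=
        integral_map hV₂.aemeasurable
          (hf₂.mul (hf₃.noiseAverage hg)).measurable.aestronglyMeasurable

theorem condExp_comp_ae_eq_noiseAverage (hV₂ : Measurable V₂) (hV₃ : Measurable V₃)
    (hg : Measurable g)
    (hgrep : Measure.map (fun p => (p.1, g p)) ((Measure.map V₂ P).prod Λ) =
      Measure.map (fun ω => (V₂ ω, V₃ ω)) P)
    {f : 𝒱₃ → ℝ} (hf : BddMeasurable f) :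
    P[fun ω => f (V₃ ω) | MeasurableSpace.comap V₂ inferInstance] =ᵐ[P]
      fun ω => noiseAverage Λ g f (V₂ ω) := by
  refine (ae_eq_condExp_of_forall_setIntegral_eq hV₂.comap_le ((hf.comp hV₃).integrable P)
    (fun s _ _ => (((hf.noiseAverage hg).comp hV₂).integrable P).integrableOn) ?_
    ((hf.noiseAverage hg).measurable.comp (comap_measurable V₂)).aestronglyMeasurable).symm
  rintro _ ⟨B, hB, rfl⟩ -
  simp_rw [setIntegral_preimage_eq_integral_indicator_mul hV₂ hB]
  exact (integral_comp_mul_comp_eq_integral_mul_noiseAverage hV₂ hV₃ hg hgrep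
    (bddMeasurable_indicator_one hB) hf).symm

theorem condIndepGiven_comap_iff_forall_setIntegral_eq (hV₁ : Measurable V₁)
    (hV₂ : Measurable V₂) (hV₃ : Measurable V₃) (hg : Measurable g)
    (hgrep : Measure.map (fun p => (p.1, g p)) ((Measure.map V₂ P).prod Λ) =
      Measure.map (fun ω => (V₂ ω, V₃ ω)) P) :
    CondIndepGiven P (MeasurableSpace.comap V₁ inferInstance)
        (MeasurableSpace.comap V₂ inferInstance) (MeasurableSpace.comap V₃ inferInstance) ↔
      ∀ f₁ f₃, BddMeasurable f₁ → BddMeasurable f₃ → ∀ B, MeasurableSet B →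
        ∫ ω in V₂ ⁻¹' B, f₁ (V₁ ω) * f₃ (V₃ ω) ∂P =
          ∫ ω in V₂ ⁻¹' B, f₁ (V₁ ω) * noiseAverage Λ g f₃ (V₂ ω) ∂P := by
  rw [condIndepGiven_comap_iff]
  refine forall₄_congr fun f₁ f₃ hf₁ hf₃ => ?_
  have hψ : BddMeasurable (noiseAverage Λ g f₃) := hf₃.noiseAverage hg
  rw [condExp_mul_ae_eq_iff_setIntegral_eq hV₂.comap_le
    (hψ.measurable.comp (comap_measurable V₂)).stronglyMeasurable
    (condExp_comp_ae_eq_noiseAverage hV₂ hV₃ hg hgrep hf₃) ((hf₁.comp hV₁).integrable P)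
    (((hf₁.comp hV₁).mul (hf₃.comp hV₃)).integrable P)
    (((hf₁.comp hV₁).mul (hψ.comp hV₂)).integrable P)]
  exact ⟨fun h B hB => h _ ⟨B, hB, rfl⟩, by rintro h _ ⟨B, hB, rfl⟩; exact h B hB⟩

theorem integral_indicator_mul_map_noise_eq_setIntegral (hV₁ : Measurable V₁)
    (hV₂ : Measurable V₂) (hg : Measurable g) {f₁ : 𝒱₁ → ℝ} {f₃ : 𝒱₃ → ℝ}
    (hf₁ : BddMeasurable f₁) (hf₃ : BddMeasurable f₃) {B : Set 𝒱₂} (hB : MeasurableSet B) :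
    ∫ v, B.indicator 1 v.2.1 * (f₁ v.1 * f₃ v.2.2)
        ∂(Measure.map (fun p => (p.1.1, p.1.2, g (p.1.2, p.2)))
          ((Measure.map (fun ω => (V₁ ω, V₂ ω)) P).prod Λ)) =
      ∫ ω in V₂ ⁻¹' B, f₁ (V₁ ω) * noiseAverage Λ g f₃ (V₂ ω) ∂P := by
  have hG : Measurable fun p : (𝒱₁ × 𝒱₂) × I => (p.1.1, p.1.2, g (p.1.2, p.2)) :=
    measurable_fst.fst.prodMk (measurable_fst.snd.prodMk
      (hg.comp (measurable_fst.snd.prodMk measurable_snd)))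
  have hF : BddMeasurable fun v : 𝒱₁ × 𝒱₂ × 𝒱₃ => B.indicator 1 v.2.1 * (f₁ v.1 * f₃ v.2.2) :=
    ((bddMeasurable_indicator_one hB).comp measurable_snd.fst).mul
      ((hf₁.comp measurable_fst).mul (hf₃.comp measurable_snd.snd))
  have hφ : BddMeasurable fun w : 𝒱₁ × 𝒱₂ => B.indicator 1 w.2 * f₁ w.1 :=
    ((bddMeasurable_indicator_one hB).comp measurable_snd).mul (hf₁.comp measurable_fst)
  rw [integral_map hG.aemeasurable hF.measurable.aestronglyMeasurable]
  simp only [← mul_assoc]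
  rw [integral_prod_mul_eq_integral_mul_noiseAverage hg measurable_snd hφ hf₃,
    integral_map (hV₁.prodMk hV₂).aemeasurable
      (hφ.mul ((hf₃.noiseAverage hg).comp measurable_snd)).measurable.aestronglyMeasurable,
    setIntegral_preimage_eq_integral_indicator_mul hV₂ hB]
  simp only [mul_assoc]

theorem map_noise_eq_iff_forall_setIntegral_eq (hV₁ : Measurable V₁) (hV₂ : Measurable V₂)
    (hV₃ : Measurable V₃) (hg : Measurable g) :
    Measure.map (fun p => (p.1.1, p.1.2, g (p.1.2, p.2)))
          ((Measure.map (fun ω => (V₁ ω, V₂ ω)) P).prod Λ) =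
        Measure.map (fun ω => (V₁ ω, V₂ ω, V₃ ω)) P ↔
      ∀ f₁ f₃, BddMeasurable f₁ → BddMeasurable f₃ → ∀ B, MeasurableSet B →
        ∫ ω in V₂ ⁻¹' B, f₁ (V₁ ω) * f₃ (V₃ ω) ∂P =
          ∫ ω in V₂ ⁻¹' B, f₁ (V₁ ω) * noiseAverage Λ g f₃ (V₂ ω) ∂P := by
  constructor
  · intro h f₁ f₃ hf₁ hf₃ B hB
    rw [← integral_indicator_mul_map_eq_setIntegral hV₁ hV₂ hV₃ hf₁.measurable hf₃.measurable hB,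
      ← h,
      integral_indicator_mul_map_noise_eq_setIntegral hV₁ hV₂ hg hf₁ hf₃ hB]
  · intro h
    refine Measure.ext_prod₃ fun {A B C} hA hB hC => ?_
    have hA₁ := bddMeasurable_indicator_one hA
    have hC₁ := bddMeasurable_indicator_one hC
    have hABC := hA.prod (hB.prod hC)
    rw [← measureReal_eq_measureReal_iff, ← integral_indicator_one hABC,
      ← integral_indicator_one hABC]
    simp_rw [indicator_prod_prod_one]
    rw [integral_indicator_mul_map_noise_eq_setIntegral hV₁ hV₂ hg hA₁ hC₁ hB,
      integral_indicator_mul_map_eq_setIntegral hV₁ hV₂ hV₃ hA₁.measurable hC₁.measurable hB,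
      h _ _ hA₁ hC₁ B hB]

end NoiseAverage

theorem stmt18 {Ω 𝒱₁ 𝒱₂ 𝒱₃ : Type*} [MeasurableSpace Ω]
    [MeasurableSpace 𝒱₁] [MeasurableSpace 𝒱₂] [MeasurableSpace 𝒱₃]
    (P : Measure Ω) [IsProbabilityMeasure P]
    (V₁ : Ω → 𝒱₁) (V₂ : Ω → 𝒱₂) (V₃ : Ω → 𝒱₃)
    (hV₁ : Measurable V₁) (hV₂ : Measurable V₂) (hV₃ : Measurable V₃)
    -- a measurable map g : 𝒱₂ × [0,1] → 𝒱₃ with (π_{𝒱₂} × g)_*((V₂)_*P ⊗ Λ) = (V₂ × V₃)_*P,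
    -- Λ being the Lebesgue measure on [0,1]
    (g : 𝒱₂ × (Set.Icc (0:ℝ) 1) → 𝒱₃) (hg : Measurable g)
    (hgrep : Measure.map (fun p : 𝒱₂ × (Set.Icc (0:ℝ) 1) => (p.1, g p))
        ((Measure.map V₂ P).prod volume) =
      Measure.map (fun ω => (V₂ ω, V₃ ω)) P) :
    -- (i) ↔ (ii), where G(v₁,v₂,λ) = (v₁,v₂,g(v₂,λ))
    CondIndepGiven P (MeasurableSpace.comap V₁ inferInstance)
        (MeasurableSpace.comap V₂ inferInstance)
        (MeasurableSpace.comap V₃ inferInstance) ↔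
      Measure.map (fun p : (𝒱₁ × 𝒱₂) × (Set.Icc (0:ℝ) 1) => (p.1.1, p.1.2, g (p.1.2, p.2)))
          ((Measure.map (fun ω => (V₁ ω, V₂ ω)) P).prod volume) =
        Measure.map (fun ω => (V₁ ω, V₂ ω, V₃ ω)) P :=
  (condIndepGiven_comap_iff_forall_setIntegral_eq hV₁ hV₂ hV₃ hg hgrep).trans
    (map_noise_eq_iff_forall_setIntegral_eq hV₁ hV₂ hV₃ hg).symm
end
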